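/- arXiv:1910.03379 — 9 statements merged into one kernel-verified Lean document; each statement's English description precedes it below -/
import Mathlib

section
/- The Simson–Wallace line of a point S on the circumcircle of a triangle bisects the segment joining S to the orthocentre H of the triangle; in particular the midpoint of SH lies on the nine-point circle. -/
/-!
Put the circumcentre at the origin of `ℂ` and let `r` be the circumradius. Then the orthocentre
is `h = a + b + c`, and the foot of the perpendicular from any point `s` to the chord `bc` is
`f₁ = (b + c + s - b c s̄ / r²) / 2`. With `m = (s + h) / 2` this gives
`2 (f₁ - m) = -(a + b c s̄ / r²)`, a vector fixed by the reflection `z ↦ q z̄` where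
`q = a b c s̄ / r⁴`. Since `q` is symmetric in `a, b, c`, all three feet lie on the axis of that
reflection through `m`. The nine-point statement is the homothety of ratio `1/2` at `H`.
-/

open ComplexConjugate RealInnerProductSpace

theorem Collinear.map {k V₁ P₁ V₂ P₂ : Type*} [DivisionRing k] [AddCommGroup V₁] [Module k V₁]
    [AddTorsor V₁ P₁] [AddCommGroup V₂] [Module k V₂] [AddTorsor V₂ P₂] {s : Set P₁}
    (h : Collinear k s) (f : P₁ →ᵃ[k] P₂) : Collinear k (f '' s) := by
  rw [collinear_iff_exists_forall_eq_smul_vadd] at h ⊢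
  obtain ⟨p₀, v, hv⟩ := h
  refine ⟨f p₀, f.linear v, ?_⟩
  rintro _ ⟨p, hp, rfl⟩
  obtain ⟨r, rfl⟩ := hv p hp
  exact ⟨r, by simp⟩

theorem collinear_of_forall_vsub_mem {k V P : Type*} [DivisionRing k] [AddCommGroup V]
    [Module k V] [AddTorsor V P] {s : Set P} {p₀ : P} (h₀ : p₀ ∈ s) {W : Submodule k V}
    (hW : Module.rank k W ≤ 1) (hs : ∀ p ∈ s, p -ᵥ p₀ ∈ W) : Collinear k s := by
  have hle : vectorSpan k s ≤ W := by
    rw [vectorSpan_eq_span_vsub_set_right k h₀, Submodule.span_le]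
    rintro _ ⟨p, hp, rfl⟩
    exact hs p hp
  exact (Submodule.rank_mono hle).trans hW

theorem AffineEquiv.collinear_image_iff {k V₁ P₁ V₂ P₂ : Type*} [DivisionRing k]
    [AddCommGroup V₁] [Module k V₁] [AddTorsor V₁ P₁] [AddCommGroup V₂] [Module k V₂]
    [AddTorsor V₂ P₂] (f : P₁ ≃ᵃ[k] P₂) {s : Set P₁} :
    Collinear k (f '' s) ↔ Collinear k s := by
  refine ⟨fun h ↦ ?_, fun h ↦ h.map f.toAffineMap⟩
  simpa [Set.image_image] using h.map f.symm.toAffineMap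

theorem AffineIsometryEquiv.inner_map_vsub_map_vsub {V₁ P₁ V₂ P₂ : Type*}
    [NormedAddCommGroup V₁] [InnerProductSpace ℝ V₁] [MetricSpace P₁] [NormedAddTorsor V₁ P₁]
    [NormedAddCommGroup V₂] [InnerProductSpace ℝ V₂] [MetricSpace P₂] [NormedAddTorsor V₂ P₂]
    (f : P₁ ≃ᵃⁱ[ℝ] P₂) (p₁ p₂ p₃ p₄ : P₁) :
    ⟪f p₁ -ᵥ f p₂, f p₃ -ᵥ f p₄⟫ = ⟪p₁ -ᵥ p₂, p₃ -ᵥ p₄⟫ := by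
  rw [← f.map_vsub, ← f.map_vsub, LinearIsometryEquiv.inner_map_map]

theorem ne_zero_of_norm_eq_of_ne {E : Type*} [NormedAddCommGroup E] {b c : E} {r : ℝ}
    (hb : ‖b‖ = r) (hc : ‖c‖ = r) (hbc : b ≠ c) : r ≠ 0 := by
  rintro rfl
  exact hbc ((norm_eq_zero.1 hb).trans (norm_eq_zero.1 hc).symm)

theorem dist_midpoint_midpoint_same_right {V P : Type*} [NormedAddCommGroup V]
    [NormedSpace ℝ V] [MetricSpace P] [NormedAddTorsor V P] (p₁ p₂ p₃ : P) :
    dist (midpoint ℝ p₁ p₃) (midpoint ℝ p₂ p₃) = dist p₁ p₂ / 2 := by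
  rw [dist_eq_norm_vsub V, midpoint_vsub_midpoint_same_right, norm_smul, dist_eq_norm_vsub V]
  norm_num
  ring

namespace Complex

theorem inner_eq_zero_iff_conj_mul_add_mul_conj (u v : ℂ) :
    ⟪u, v⟫ = 0 ↔ conj u * v + u * conj v = 0 := by
  have : conj u * v + u * conj v = ((2 * ⟪u, v⟫ : ℝ) : ℂ) := by
    rw [Complex.inner, ← add_conj, map_mul, conj_conj]; ring
  rw [this, ofReal_eq_zero]; simp

/-- For `‖q‖ = 1`, the axis of the reflection `z ↦ q * conj z`; for every `q` it is a proper
real subspace of `ℂ`. -/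
def reflectionAxis (q : ℂ) : Submodule ℝ ℂ where
  carrier := {z | q * conj z = z}
  add_mem' {z w} hz hw := by simp_all [mul_add]
  zero_mem' := by simp
  smul_mem' r z hz := by simp_all [Complex.real_smul, mul_left_comm _ (r : ℂ)]

@[simp]
theorem mem_reflectionAxis {q z : ℂ} : z ∈ reflectionAxis q ↔ q * conj z = z := Iff.rfl

theorem rank_reflectionAxis_le_one (q : ℂ) : Module.rank ℝ (reflectionAxis q) ≤ 1 := by
  have hlt : reflectionAxis q ≠ ⊤ := by
    intro htop
    have h1 : q * conj 1 = 1 := (htop ▸ Submodule.mem_top : (1 : ℂ) ∈ reflectionAxis q)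
    have hI : q * conj I = I := (htop ▸ Submodule.mem_top : I ∈ reflectionAxis q)
    simp only [map_one, mul_one] at h1
    rw [h1, conj_I] at hI
    have := congrArg im hI
    norm_num at this
  have := Submodule.finrank_lt hlt
  rw [finrank_real_complex] at this
  rw [← Module.finrank_eq_rank]
  exact_mod_cast Nat.lt_succ_iff.1 this

theorem collinear_iff_mul_conj_eq {a b c : ℂ} :
    Collinear ℝ {a, b, c} ↔ (b - a) * conj (c - a) = conj (b - a) * (c - a) := by
  constructor
  · intro h
    obtain ⟨v, hv⟩ := (collinear_iff_of_mem (Set.mem_insert a _)).1 h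
    obtain ⟨t, rfl⟩ := hv b (by simp)
    obtain ⟨u, rfl⟩ := hv c (by simp)
    simp only [vadd_eq_add, add_sub_cancel_right, real_smul, map_mul, conj_ofReal]
    ring
  · intro h
    by_cases hab : b = a
    · subst hab
      simpa using collinear_pair ℝ b c
    have hconj : conj (b - a) ≠ 0 := (map_ne_zero _).2 (sub_ne_zero.2 hab)
    refine collinear_of_forall_vsub_mem (Set.mem_insert a _)
      (rank_reflectionAxis_le_one ((b - a) / conj (b - a))) ?_
    simp only [Set.mem_insert_iff, Set.mem_singleton_iff, forall_eq_or_imp, forall_eq,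
      vsub_eq_sub]
    refine ⟨by simp, ?_, ?_⟩ <;> rw [mem_reflectionAxis] <;> field_simp
    linear_combination h

theorem two_mul_eq_of_collinear_of_inner_eq_zero {b c s f : ℂ} {r : ℝ} (hb : ‖b‖ = r)
    (hc : ‖c‖ = r) (hbc : b ≠ c) (hf : Collinear ℝ {b, c, f}) (hsf : ⟪s - f, c - b⟫ = 0) :
    2 * f = b + c + s - b * c * conj s / r ^ 2 := by
  have hb' : b * conj b = r ^ 2 := by rw [mul_conj', hb]
  have hc' : c * conj c = r ^ 2 := by rw [mul_conj', hc]
  have hr : (r : ℂ) ≠ 0 := ofReal_ne_zero.2 (ne_zero_of_norm_eq_of_ne hb hc hbc)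
  have hcb : conj (c - b) ≠ 0 := (map_ne_zero _).2 (sub_ne_zero.2 hbc.symm)
  have hline := collinear_iff_mul_conj_eq.1 hf
  have hperp := (inner_eq_zero_iff_conj_mul_add_mul_conj _ _).1 hsf
  have key : (r ^ 2 * (2 * f - (b + c + s)) + b * c * conj s) * conj (c - b) = 0 := by
    simp only [map_sub] at hline hperp ⊢
    linear_combination -(r : ℂ) ^ 2 * (hline + hperp) + ((r : ℂ) ^ 2 - c * conj s) * hb' +
      (b * conj s - (r : ℂ) ^ 2) * hc'
  field_simp
  linear_combination (mul_eq_zero.1 key).resolve_right hcb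

theorem eq_add_add_of_inner_eq_zero {a b c h : ℂ} {r : ℝ} (ha : ‖a‖ = r) (hb : ‖b‖ = r)
    (hc : ‖c‖ = r) (habc : ¬Collinear ℝ {a, b, c}) (h₁ : ⟪h - a, b - c⟫ = 0)
    (h₂ : ⟪h - b, c - a⟫ = 0) : h = a + b + c := by
  have ha' : a * conj a = r ^ 2 := by rw [mul_conj', ha]
  have hb' : b * conj b = r ^ 2 := by rw [mul_conj', hb]
  have hc' : c * conj c = r ^ 2 := by rw [mul_conj', hc]
  have hX : (b - a) * conj (c - a) - conj (b - a) * (c - a) ≠ 0 :=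
    sub_ne_zero.2 fun h ↦ habc (collinear_iff_mul_conj_eq.2 h)
  have H₁ := (inner_eq_zero_iff_conj_mul_add_mul_conj _ _).1 h₁
  have H₂ := (inner_eq_zero_iff_conj_mul_add_mul_conj _ _).1 h₂
  have key : (h - (a + b + c)) * ((b - a) * conj (c - a) - conj (b - a) * (c - a)) = 0 := by
    simp only [map_sub] at H₁ H₂ ⊢
    linear_combination (a - c) * H₁ + (b - c) * H₂ + 2 * (c - a) * (hb' - hc') -
      2 * (b - c) * (hc' - ha')
  exact sub_eq_zero.1 ((mul_eq_zero.1 key).resolve_right hX)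

theorem sub_mem_reflectionAxis {a b c s f m : ℂ} {r : ℝ} (ha : ‖a‖ = r) (hb : ‖b‖ = r)
    (hc : ‖c‖ = r) (hs : ‖s‖ = r) (hr : r ≠ 0)
    (hf : 2 * f = b + c + s - b * c * conj s / r ^ 2) (hm : 2 * m = a + b + c + s) :
    f - m ∈ reflectionAxis (a * b * c * conj s / r ^ 4) := by
  have ha' : a * conj a = r ^ 2 := by rw [mul_conj', ha]
  have hb' : b * conj b = r ^ 2 := by rw [mul_conj', hb]
  have hc' : c * conj c = r ^ 2 := by rw [mul_conj', hc]
  have hs' : s * conj s = r ^ 2 := by rw [mul_conj', hs]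
  have hR : (r : ℂ) ≠ 0 := ofReal_ne_zero.2 hr
  have hw : r ^ 2 * (2 * (f - m)) = -(a * r ^ 2 + b * c * conj s) := by
    field_simp at hf
    linear_combination hf - r ^ 2 * hm
  have hw' := congrArg conj hw
  simp only [map_mul, map_add, map_sub, map_neg, map_pow, conj_ofReal, conj_conj, map_ofNat] at hw'
  rw [mem_reflectionAxis, map_sub, div_mul_eq_mul_div, div_eq_iff (pow_ne_zero 4 hR)]
  apply mul_left_cancel₀ (mul_ne_zero two_ne_zero (pow_ne_zero 2 hR))
  linear_combination a * b * c * conj s * hw' - r ^ 4 * hw - b * c * conj s * r ^ 2 * ha' -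
    a * (c * conj c * s * conj s * hb' + r ^ 2 * s * conj s * hc' + r ^ 4 * hs')

theorem collinear_feet_midpoint {a b c s h f₁ f₂ f₃ : ℂ} {r : ℝ} (ha : ‖a‖ = r)
    (hb : ‖b‖ = r) (hc : ‖c‖ = r) (hs : ‖s‖ = r) (habc : ¬Collinear ℝ {a, b, c})
    (hh₁ : ⟪h - a, b - c⟫ = 0) (hh₂ : ⟪h - b, c - a⟫ = 0)
    (hf₁ : Collinear ℝ {b, c, f₁}) (hf₁' : ⟪s - f₁, c - b⟫ = 0)
    (hf₂ : Collinear ℝ {c, a, f₂}) (hf₂' : ⟪s - f₂, a - c⟫ = 0)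
    (hf₃ : Collinear ℝ {a, b, f₃}) (hf₃' : ⟪s - f₃, b - a⟫ = 0) :
    Collinear ℝ {f₁, f₂, f₃, midpoint ℝ s h} := by
  have hab : a ≠ b := by rintro rfl; exact habc (by simpa using collinear_pair ℝ a c)
  have hbc : b ≠ c := by rintro rfl; exact habc (by simpa using collinear_pair ℝ a b)
  have hca : c ≠ a := by rintro rfl; exact habc (by simpa using collinear_pair ℝ b c)
  have hr : r ≠ 0 := ne_zero_of_norm_eq_of_ne ha hb hab
  have hm : 2 * midpoint ℝ s h = a + b + c + s := by
    rw [midpoint_eq_smul_add, eq_add_add_of_inner_eq_zero ha hb hc habc hh₁ hh₂, real_smul,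
      invOf_eq_inv]
    push_cast
    ring
  refine collinear_of_forall_vsub_mem (p₀ := midpoint ℝ s h) (by simp)
    (rank_reflectionAxis_le_one (a * b * c * conj s / r ^ 4)) ?_
  simp only [Set.mem_insert_iff, Set.mem_singleton_iff, forall_eq_or_imp, forall_eq,
    vsub_eq_sub, sub_self, Submodule.zero_mem, and_true]
  refine ⟨?_, ?_, ?_⟩
  · exact sub_mem_reflectionAxis ha hb hc hs hr
      (two_mul_eq_of_collinear_of_inner_eq_zero hb hc hbc hf₁ hf₁') hm
  · convert sub_mem_reflectionAxis hb hc ha hs hr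
      (two_mul_eq_of_collinear_of_inner_eq_zero hc ha hca hf₂ hf₂') (by rw [hm]; ring) using 3
    ring
  · convert sub_mem_reflectionAxis hc ha hb hs hr
      (two_mul_eq_of_collinear_of_inner_eq_zero ha hb hab hf₃ hf₃') (by rw [hm]; ring) using 3
    ring

end Complex

/-- The Simson–Wallace line of a point `S` on the circumcircle (centre `O`) of a
triangle `A B C` bisects the segment joining `S` to the orthocentre `H`: the midpoint
of `S H` lies on the Simson–Wallace line (through the feet `F₁, F₂, F₃` of the
perpendiculars from `S` to the edge-lines); in particular this midpoint lies on the
nine-point circle, the circle of centre `midpoint O H` and radius `R / 2`. -/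
theorem stmt_7 (A B C O H S F₁ F₂ F₃ : EuclideanSpace ℝ (Fin 2))
    (htri : AffineIndependent ℝ ![A, B, C])
    (hO1 : dist O A = dist O B) (hO2 : dist O B = dist O C)
    (hH1 : ⟪H - A, B - C⟫ = 0) (hH2 : ⟪H - B, C - A⟫ = 0)
    (hS : dist O S = dist O A)
    (hF₁ : Collinear ℝ ({B, C, F₁} : Set (EuclideanSpace ℝ (Fin 2))) ∧
      ⟪S - F₁, C - B⟫ = 0)
    (hF₂ : Collinear ℝ ({C, A, F₂} : Set (EuclideanSpace ℝ (Fin 2))) ∧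
      ⟪S - F₂, A - C⟫ = 0)
    (hF₃ : Collinear ℝ ({A, B, F₃} : Set (EuclideanSpace ℝ (Fin 2))) ∧
      ⟪S - F₃, B - A⟫ = 0) :
    Collinear ℝ ({F₁, F₂, F₃, midpoint ℝ S H} : Set (EuclideanSpace ℝ (Fin 2))) ∧
    dist (midpoint ℝ O H) (midpoint ℝ S H) = dist O A / 2 := by
  let φ : EuclideanSpace ℝ (Fin 2) ≃ᵃⁱ[ℝ] ℂ := (AffineIsometryEquiv.vaddConst ℝ O).symm.trans
    Complex.orthonormalBasisOneI.repr.symm.toAffineIsometryEquiv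
  have hφO : φ O = 0 := by simp [φ]
  have hnorm (X : EuclideanSpace ℝ (Fin 2)) : ‖φ X‖ = dist O X := by
    rw [← dist_zero_right, ← hφO, φ.dist_map, dist_comm]
  have hinner (X Y Z W : EuclideanSpace ℝ (Fin 2)) :
      ⟪φ X - φ Y, φ Z - φ W⟫ = ⟪X - Y, Z - W⟫ :=
    φ.inner_map_vsub_map_vsub X Y Z W
  have hcoll {s : Set (EuclideanSpace ℝ (Fin 2))} : Collinear ℝ (φ '' s) ↔ Collinear ℝ s :=
    φ.toAffineEquiv.collinear_image_iff
  refine ⟨?_, by rw [dist_midpoint_midpoint_same_right, hS]⟩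
  have hmid : φ (midpoint ℝ S H) = midpoint ℝ (φ S) (φ H) :=
    φ.toAffineEquiv.map_midpoint S H
  have hcoll₃ (X Y Z : EuclideanSpace ℝ (Fin 2)) :
      Collinear ℝ {φ X, φ Y, φ Z} ↔ Collinear ℝ {X, Y, Z} := by
    rw [← hcoll, Set.image_insert_eq, Set.image_insert_eq, Set.image_singleton]
  rw [← hcoll, Set.image_insert_eq, Set.image_insert_eq, Set.image_insert_eq,
    Set.image_singleton, hmid]
  refine Complex.collinear_feet_midpoint (hnorm A) (by rw [hnorm, ← hO1])
    (by rw [hnorm, ← hO2, ← hO1]) (by rw [hnorm, hS])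
    ((hcoll₃ A B C).not.2 (affineIndependent_iff_not_collinear_set.1 htri))
    ((hinner ..).trans hH1) ((hinner ..).trans hH2)
    ((hcoll₃ ..).2 hF₁.1) ((hinner ..).trans hF₁.2)
    ((hcoll₃ ..).2 hF₂.1) ((hinner ..).trans hF₂.2)
    ((hcoll₃ ..).2 hF₃.1) ((hinner ..).trans hF₃.2)
end

section
/- The angle between the Simson–Wallace lines of two points S and S′ on the circumcircle of a triangle equals half the angular measure of the arc S′S. -/
/-!
The feet `F₁`, `F₂` of the perpendiculars from `S` to `BC` and `CA` see the segment `SC` at a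
right angle, so `S, F₁, C, F₂` lie on the circle with diameter `SC`. Inscribed angles in that
circle show that, modulo `π`, the line `F₁F₂` makes with `BC` the angle `∠(CA, CS)` plus a right
angle. Subtracting these relations for `S` and `S'` leaves the inscribed angle `∠S'CS` of the
circumcircle, which is half the central angle `∠S'OS`.
-/

open RealInnerProductSpace Real

section

variable {V : Type*} [NormedAddCommGroup V] [InnerProductSpace ℝ V]

def IsPerpFoot (S P Q F : V) : Prop :=
  Collinear ℝ ({P, Q, F} : Set V) ∧ ⟪S - F, Q - P⟫ = 0

theorem Collinear.exists_sub_eq_smul_sub {s : Set V} (h : Collinear ℝ s) {P Q X F : V}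
    (hP : P ∈ s) (hQ : Q ∈ s) (hX : X ∈ s) (hF : F ∈ s) (hPQ : P ≠ Q) :
    ∃ t : ℝ, F - X = t • (Q - P) := by
  have hmem : F -ᵥ X ∈ (line[ℝ, P, Q]).direction :=
    AffineSubspace.vsub_mem_direction (h.mem_affineSpan_of_mem_of_ne hP hQ hF hPQ)
      (h.mem_affineSpan_of_mem_of_ne hP hQ hX hPQ)
  rw [direction_affineSpan, vectorSpan_pair_rev, Submodule.mem_span_singleton] at hmem
  obtain ⟨t, ht⟩ := hmem
  exact ⟨t, ht.symm⟩

theorem IsPerpFoot.eq_of_mem {X P Q F : V} (h : IsPerpFoot X P Q F) (hPQ : P ≠ Q)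
    (hX : X ∈ ({P, Q} : Set V)) : F = X := by
  have hX' : X ∈ ({P, Q, F} : Set V) := by
    simp only [Set.mem_insert_iff, Set.mem_singleton_iff] at hX ⊢
    tauto
  obtain ⟨t, ht⟩ := h.1.exists_sub_eq_smul_sub (F := F) (by simp) (by simp) hX' (by simp) hPQ
  have h2 := h.2
  rw [← neg_sub, ht, inner_neg_left, real_inner_smul_left, neg_eq_zero, mul_eq_zero,
    inner_self_eq_zero, sub_eq_zero] at h2
  rcases h2 with rfl | h2
  · simpa [sub_eq_zero] using ht
  · exact absurd h2.symm hPQ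

theorem ne_of_isPerpFoot {A B C S F₁ F₂ : V} (hBC : B ≠ C) (hCA : C ≠ A)
    (h₁ : IsPerpFoot S B C F₁) (h₂ : IsPerpFoot S C A F₂) (hne : F₁ ≠ F₂) : S ≠ C := by
  rintro rfl
  exact hne ((h₁.eq_of_mem hBC (by simp)).trans (h₂.eq_of_mem hCA (by simp)).symm)

theorem norm_sub_midpoint_eq_of_inner_eq_zero {S C P : V} (h : ⟪S - P, C - P⟫ = 0) :
    ‖P - midpoint ℝ S C‖ = dist S C / 2 := by
  have hP : P ∈ EuclideanGeometry.Sphere.ofDiameter S C :=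
    EuclideanGeometry.Sphere.angle_eq_pi_div_two_iff_mem_sphere_ofDiameter.1 <| by
      rwa [EuclideanGeometry.angle, ← InnerProductGeometry.inner_eq_zero_iff_angle_eq_pi_div_two]
  rwa [EuclideanGeometry.mem_sphere, dist_eq_norm] at hP

end

namespace Orientation

variable {V : Type*} [NormedAddCommGroup V] [InnerProductSpace ℝ V]
  [Fact (Module.finrank ℝ V = 2)] (o : Orientation ℝ V (Fin 2))

theorem two_zsmul_oangle_of_inner_eq_zero {x y : V} (hx : x ≠ 0) (hy : y ≠ 0)
    (h : ⟪x, y⟫ = 0) : (2 : ℤ) • o.oangle x y = π :=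
  Real.Angle.two_zsmul_eq_pi_iff.2
    (((o.eq_zero_or_oangle_eq_iff_inner_eq_zero.2 h).resolve_left hx).resolve_left hy)

theorem two_zsmul_oangle_sub_eq_of_inner_eq_zero {S C P₁ P₂ Q R : V}
    (hP₁ : ⟪S - P₁, C - P₁⟫ = 0) (hP₂ : ⟪S - P₂, C - P₂⟫ = 0)
    (hQ : ⟪S - Q, C - Q⟫ = 0) (hR : ⟪S - R, C - R⟫ = 0)
    (hP₁Q : P₁ ≠ Q) (hP₁R : P₁ ≠ R) (hP₂Q : P₂ ≠ Q) (hP₂R : P₂ ≠ R) :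
    (2 : ℤ) • o.oangle (Q - P₁) (R - P₁) = (2 : ℤ) • o.oangle (Q - P₂) (R - P₂) := by
  have h := o.two_zsmul_oangle_sub_eq_two_zsmul_oangle_sub_of_norm_eq
    (sub_left_injective.ne hP₁Q) (sub_left_injective.ne hP₁R) (sub_left_injective.ne hP₂Q)
    (sub_left_injective.ne hP₂R) (norm_sub_midpoint_eq_of_inner_eq_zero hP₁)
    (norm_sub_midpoint_eq_of_inner_eq_zero hP₂) (norm_sub_midpoint_eq_of_inner_eq_zero hQ)
    (norm_sub_midpoint_eq_of_inner_eq_zero hR)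
  simpa only [sub_sub_sub_cancel_right] using h

theorem two_zsmul_oangle_sub_perpFoot {A B C S F₁ F₂ : V} (hBC : B ≠ C) (hCA : C ≠ A)
    (hSC : S ≠ C) (h₁ : IsPerpFoot S B C F₁) (h₂ : IsPerpFoot S C A F₂) (hne : F₁ ≠ F₂) :
    (2 : ℤ) • o.oangle (F₂ - F₁) (C - B) = (2 : ℤ) • o.oangle (A - C) (S - C) + π := by
  have hu : C - B ≠ 0 := sub_ne_zero.2 hBC.symm
  have hw : A - C ≠ 0 := sub_ne_zero.2 hCA.symm
  have hSC0 : S - C ≠ 0 := sub_ne_zero.2 hSC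
  have hF : F₂ - F₁ ≠ 0 := sub_ne_zero.2 hne.symm
  obtain ⟨t, ht⟩ : ∃ t : ℝ, F₁ - C = t • (C - B) :=
    h₁.1.exists_sub_eq_smul_sub (by simp) (by simp) (by simp) (by simp) hBC
  obtain ⟨s, hs⟩ : ∃ s : ℝ, F₂ - C = s • (A - C) :=
    h₂.1.exists_sub_eq_smul_sub (by simp) (by simp) (by simp) (by simp) hCA
  by_cases hSF₁ : S = F₁
  · subst hSF₁
    have hF₂S : (2 : ℤ) • o.oangle (F₂ - S) (A - C) = π :=
      o.two_zsmul_oangle_of_inner_eq_zero hF hw (by rw [← neg_sub, inner_neg_left, h₂.2, neg_zero])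
    have hSB : (2 : ℤ) • o.oangle (S - C) (C - B) = 0 := by
      rw [ht, two_zsmul_oangle_smul_left_self]
    rw [← o.oangle_add hF hw hu, ← o.oangle_add hw hSC0 hu, smul_add, smul_add, hF₂S, hSB,
      add_zero, add_comm]
  by_cases hF₂C : F₂ = C
  · have hF₁F₂ : F₂ - F₁ = (-t) • (C - B) := by rw [hF₂C, ← neg_sub, ht, neg_smul]
    have hSC_perp : ⟪A - C, S - C⟫ = 0 := by rw [real_inner_comm, ← h₂.2, hF₂C]
    rw [hF₁F₂, two_zsmul_oangle_smul_left_self,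
      o.two_zsmul_oangle_of_inner_eq_zero hw hSC0 hSC_perp, Real.Angle.coe_pi_add_coe_pi]
  have hs0 : s ≠ 0 := by
    rintro rfl
    exact hF₂C (sub_eq_zero.1 (by simpa using hs))
  have hcyc : (2 : ℤ) • o.oangle (F₂ - F₁) (S - F₁) = (2 : ℤ) • o.oangle (F₂ - C) (S - C) :=
    o.two_zsmul_oangle_sub_eq_of_inner_eq_zero (S := S) (C := C)
      (by rw [← neg_sub F₁ C, ht, inner_neg_right, real_inner_smul_right, h₁.2, mul_zero, neg_zero])
      (by simp)
      (by rw [← neg_sub F₂ C, hs, inner_neg_right, real_inner_smul_right, h₂.2, mul_zero, neg_zero])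
      (by simp) hne (Ne.symm hSF₁) (Ne.symm hF₂C) (Ne.symm hSC)
  rw [← o.oangle_add hF (sub_ne_zero.2 hSF₁) hu, smul_add, hcyc, hs,
    o.two_zsmul_oangle_smul_left_of_ne_zero _ _ hs0,
    o.two_zsmul_oangle_of_inner_eq_zero (sub_ne_zero.2 hSF₁) hu h₁.2]

end Orientation

/-- Angles between lines are only defined modulo `π`, so the statement doubles oriented angles;
the Simson–Wallace line of `S` is the line `F₁F₂`. -/
theorem stmt_8_general {V : Type*} [NormedAddCommGroup V] [InnerProductSpace ℝ V]
    [Fact (Module.finrank ℝ V = 2)] (o : Orientation ℝ V (Fin 2))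
    (A B C O S S' F₁ F₂ F₁' F₂' : V)
    (htri : AffineIndependent ℝ ![A, B, C])
    (hO1 : dist O A = dist O B) (hO2 : dist O B = dist O C)
    (hS : dist O S = dist O A) (hS' : dist O S' = dist O A)
    (hF₁ : Collinear ℝ ({B, C, F₁} : Set V) ∧ ⟪S - F₁, C - B⟫ = 0)
    (hF₂ : Collinear ℝ ({C, A, F₂} : Set V) ∧ ⟪S - F₂, A - C⟫ = 0)
    (hF₁' : Collinear ℝ ({B, C, F₁'} : Set V) ∧ ⟪S' - F₁', C - B⟫ = 0)
    (hF₂' : Collinear ℝ ({C, A, F₂'} : Set V) ∧ ⟪S' - F₂', A - C⟫ = 0)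
    (hne : F₁ ≠ F₂) (hne' : F₁' ≠ F₂') :
    (2 : ℤ) • o.oangle (F₂ - F₁) (F₂' - F₁') = o.oangle (S' - O) (S - O) := by
  have hBC : B ≠ C := by simpa using htri.injective.ne (show (1 : Fin 3) ≠ 2 by decide)
  have hCA : C ≠ A := by simpa using htri.injective.ne (show (2 : Fin 3) ≠ 0 by decide)
  have hSC : S ≠ C := ne_of_isPerpFoot hBC hCA hF₁ hF₂ hne
  have hS'C : S' ≠ C := ne_of_isPerpFoot hBC hCA hF₁' hF₂' hne'
  have hR : ∀ X, dist O X = dist O A → ‖X - O‖ = dist O A := fun X hX => by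
    rw [← hX, dist_comm, dist_eq_norm]
  calc (2 : ℤ) • o.oangle (F₂ - F₁) (F₂' - F₁')
      = (2 : ℤ) • o.oangle (F₂ - F₁) (C - B) - (2 : ℤ) • o.oangle (F₂' - F₁') (C - B) := by
        rw [← smul_sub, o.oangle_sub_right (sub_ne_zero.2 hne.symm) (sub_ne_zero.2 hne'.symm)
          (sub_ne_zero.2 hBC.symm)]
    _ = (2 : ℤ) • o.oangle (A - C) (S - C) - (2 : ℤ) • o.oangle (A - C) (S' - C) := by
        rw [o.two_zsmul_oangle_sub_perpFoot hBC hCA hSC hF₁ hF₂ hne,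
          o.two_zsmul_oangle_sub_perpFoot hBC hCA hS'C hF₁' hF₂' hne', add_sub_add_right_eq_sub]
    _ = (2 : ℤ) • o.oangle (S' - C) (S - C) := by
        rw [← smul_sub, o.oangle_sub_left (sub_ne_zero.2 hCA.symm) (sub_ne_zero.2 hS'C)
          (sub_ne_zero.2 hSC)]
    _ = o.oangle (S' - O) (S - O) := by
        rw [o.oangle_eq_two_zsmul_oangle_sub_of_norm_eq_real (sub_left_injective.ne hS'C.symm)
          (sub_left_injective.ne hSC.symm) (hR C (by rw [← hO2, ← hO1])) (hR S' hS') (hR S hS),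
          sub_sub_sub_cancel_right, sub_sub_sub_cancel_right]

/-- The angle between the Simson–Wallace lines of two points `S` and `S'` on the
circumcircle (centre `O`) of a triangle equals half the angular measure of the arc
`S'S`.  Since the angle between two lines is only defined modulo `π`, this is stated
in doubled form using oriented angles: twice the oriented angle between the two
Simson–Wallace lines (through the feet of perpendiculars `F₁ F₂` resp. `F₁' F₂'`)
equals the oriented angle `∠ S' O S` of the arc. -/
theorem stmt_8 {V : Type*} [NormedAddCommGroup V] [InnerProductSpace ℝ V]
    [Fact (Module.finrank ℝ V = 2)] (o : Orientation ℝ V (Fin 2))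
    (A B C O S S' F₁ F₂ F₃ F₁' F₂' F₃' : V)
    (htri : AffineIndependent ℝ ![A, B, C])
    (hO1 : dist O A = dist O B) (hO2 : dist O B = dist O C)
    (hS : dist O S = dist O A) (hS' : dist O S' = dist O A)
    (hF₁ : Collinear ℝ ({B, C, F₁} : Set V) ∧ ⟪S - F₁, C - B⟫ = 0)
    (hF₂ : Collinear ℝ ({C, A, F₂} : Set V) ∧ ⟪S - F₂, A - C⟫ = 0)
    (hF₃ : Collinear ℝ ({A, B, F₃} : Set V) ∧ ⟪S - F₃, B - A⟫ = 0)
    (hF₁' : Collinear ℝ ({B, C, F₁'} : Set V) ∧ ⟪S' - F₁', C - B⟫ = 0)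
    (hF₂' : Collinear ℝ ({C, A, F₂'} : Set V) ∧ ⟪S' - F₂', A - C⟫ = 0)
    (hF₃' : Collinear ℝ ({A, B, F₃'} : Set V) ∧ ⟪S' - F₃', B - A⟫ = 0)
    (hne : F₁ ≠ F₂) (hne' : F₁' ≠ F₂') :
    (2 : ℤ) • o.oangle (F₂ - F₁) (F₂' - F₁') = o.oangle (S' - O) (S - O) :=
  stmt_8_general o A B C O S S' F₁ F₂ F₁' F₂' htri hO1 hO2 hS hS' hF₁ hF₂ hF₁' hF₂' hne hne'
end

section
/- Steiner's theorem on reflected points: if a point P lies on the circumcircle of a triangle, then the three reflexions of P in the three edge-lines of the triangle are collinear, and the line through them (the Steiner line) passes through the orthocentre of the triangle. -/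
/-!
Put the circumcentre at the origin of `ℂ`, so that `A, B, C, P` become `a, b, c, p` on a circle
`|z| = R`, where `conj z = R² / z`. Then `H = a + b + c` (Sylvester's relation) and the reflection
of `p` in the chord `bc` is `b + c - bc / p`, so `P₁ - H = -(a + bc / p)`, and cyclically.
If `v² = abc / p`, then `(a + bc / p) / v` equals its own conjugate, so each `Pᵢ - H` is a real
multiple of the same vector `v`.
-/

open RealInnerProductSpace ComplexConjugate Module

theorem ne_zero_of_ne_of_norm_eq {E : Type*} [NormedAddCommGroup E] {b c p : E} (hbc : b ≠ c)
    (hb : ‖b‖ = ‖p‖) (hc : ‖c‖ = ‖p‖) : p ≠ 0 := by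
  rintro rfl
  rw [norm_zero, norm_eq_zero] at hb hc
  exact hbc (hb.trans hc.symm)

namespace Complex

theorem conj_eq_norm_sq_div (z : ℂ) : conj z = ‖z‖ ^ 2 / z := by
  rcases eq_or_ne z 0 with rfl | hz
  · simp
  · rw [← mul_conj', mul_div_cancel_left₀ _ hz]

theorem ofReal_inner (w z : ℂ) : ((⟪w, z⟫ : ℝ) : ℂ) = (z * conj w + conj z * w) / 2 := by
  rw [Complex.inner, re_eq_add_conj, map_mul, conj_conj]

theorem two_smul_foot_sub_eq {b c p : ℂ} {t : ℝ} (hbc : b ≠ c) (hb : ‖b‖ = ‖p‖)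
    (hc : ‖c‖ = ‖p‖) (ht : t * ‖c - b‖ ^ 2 = ⟪p - b, c - b⟫) :
    2 • (b + t • (c - b)) - p = b + c - b * c / p := by
  have hp : p ≠ 0 := ne_zero_of_ne_of_norm_eq hbc hb hc
  have hb0 : b ≠ 0 := norm_ne_zero_iff.mp (hb ▸ norm_ne_zero_iff.mpr hp)
  have hc0 : c ≠ 0 := norm_ne_zero_iff.mp (hc ▸ norm_ne_zero_iff.mpr hp)
  have hd : conj (c - b) ≠ 0 := (map_ne_zero _).mpr (sub_ne_zero.mpr hbc.symm)
  have ht' : (t : ℂ) * ((c - b) * conj (c - b)) =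
      ((c - b) * conj (p - b) + conj (c - b) * (p - b)) / 2 := by
    rw [mul_conj', ← ofReal_inner]
    exact_mod_cast ht
  rw [real_smul, two_nsmul]
  apply mul_right_cancel₀ hd
  simp only [map_sub, conj_eq_norm_sq_div b, conj_eq_norm_sq_div c, conj_eq_norm_sq_div p,
    hb, hc] at ht' ⊢
  linear_combination (norm := skip) 2 * ht'
  field_simp
  ring

theorem exists_add_mul_div_eq_ofReal_mul {a b c p v : ℂ} (ha : ‖a‖ = ‖p‖) (hb : ‖b‖ = ‖p‖)
    (hc : ‖c‖ = ‖p‖) (hp : p ≠ 0) (hv : v ^ 2 = a * b * c / p) :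
    ∃ r : ℝ, a + b * c / p = r * v := by
  have hR : ‖p‖ ≠ 0 := norm_ne_zero_iff.mpr hp
  have hR' : (‖p‖ : ℂ) ≠ 0 := ofReal_ne_zero.mpr hR
  have ha0 : a ≠ 0 := norm_ne_zero_iff.mp (ha ▸ hR)
  have hb0 : b ≠ 0 := norm_ne_zero_iff.mp (hb ▸ hR)
  have hc0 : c ≠ 0 := norm_ne_zero_iff.mp (hc ▸ hR)
  have hv0 : v ≠ 0 := by
    rintro rfl
    rw [eq_comm, zero_pow two_ne_zero, div_eq_zero_iff] at hv
    simp_all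
  have hvn : ‖v‖ = ‖p‖ := by
    have : ‖v‖ ^ 2 = ‖p‖ ^ 2 := by
      rw [← norm_pow, hv]
      simp only [norm_div, norm_mul, ha, hb, hc]
      field_simp
    exact (pow_left_inj₀ (norm_nonneg _) (norm_nonneg _) two_ne_zero).mp this
  have hreal : conj ((a + b * c / p) / v) = (a + b * c / p) / v := by
    simp only [map_div₀, map_add, map_mul, conj_eq_norm_sq_div a, conj_eq_norm_sq_div b,
      conj_eq_norm_sq_div c, conj_eq_norm_sq_div p, conj_eq_norm_sq_div v, ha, hb, hc, hvn]
    -- both sides reduce to `(a p + b c) / (p v)` and `(a p + b c) v / (a b c)`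
    linear_combination (norm := skip) (a * p + b * c) / (a * b * c * v) * hv
    field_simp
    ring
  refine ⟨((a + b * c / p) / v).re, ?_⟩
  calc a + b * c / p = (a + b * c / p) / v * v := (div_mul_cancel₀ _ hv0).symm
    _ = _ := congrArg (· * v) (conj_eq_iff_re.mp hreal).symm

theorem exists_reflection_sub_eq_ofReal_mul {a b c p v : ℂ} {t : ℝ} (hbc : b ≠ c)
    (ha : ‖a‖ = ‖p‖) (hb : ‖b‖ = ‖p‖) (hc : ‖c‖ = ‖p‖) (ht : t * ‖c - b‖ ^ 2 = ⟪p - b, c - b⟫)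
    (hv : v ^ 2 = a * b * c / p) :
    ∃ r : ℝ, 2 • (b + t • (c - b)) - p - (a + b + c) = r * v := by
  have hp : p ≠ 0 := ne_zero_of_ne_of_norm_eq hbc hb hc
  obtain ⟨r, hr⟩ := exists_add_mul_div_eq_ofReal_mul ha hb hc hp hv
  refine ⟨-r, ?_⟩
  rw [two_smul_foot_sub_eq hbc hb hc ht]
  push_cast
  linear_combination -hr

end Complex

section InnerProductSpace

variable {V : Type*} [NormedAddCommGroup V] [InnerProductSpace ℝ V]

theorem eq_zero_of_inner_sub_eq_zero_of_affineIndependent (hV : finrank ℝ V = 2) {A B C v : V}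
    (h : AffineIndependent ℝ ![A, B, C]) (hB : ⟪v, B - A⟫ = 0) (hC : ⟪v, C - A⟫ = 0) :
    v = 0 := by
  have : Fact (finrank ℝ V = 1 + 1) := ⟨hV⟩
  have : FiniteDimensional ℝ V := .of_fact_finrank_eq_succ 1
  by_contra hv
  apply affineIndependent_iff_not_collinear_set.mp h
  have hle : vectorSpan ℝ {A, B, C} ≤ (ℝ ∙ v)ᗮ := by
    rw [vectorSpan_eq_span_vsub_set_right ℝ (Set.mem_insert A _), Submodule.span_le]
    rintro _ ⟨X, hX, rfl⟩
    rw [SetLike.mem_coe, Submodule.mem_orthogonal_singleton_iff_inner_right]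
    rcases hX with rfl | rfl | rfl
    · simp
    · exact hB
    · exact hC
  rw [collinear_iff_finrank_le_one,
    ← Submodule.finrank_orthogonal_span_singleton (𝕜 := ℝ) (n := 1) hv]
  exact Submodule.finrank_mono hle

theorem inner_sub_add_sub_of_dist_eq {O X Y : V} (h : dist O X = dist O Y) :
    ⟪(X - O) + (Y - O), X - Y⟫ = 0 := by
  rw [show X - Y = (X - O) - (Y - O) by abel, real_inner_add_sub_eq_zero_iff,
    ← dist_eq_norm, ← dist_eq_norm, dist_comm, h, dist_comm]

theorem sub_eq_add_add_of_inner_eq_zero (hV : finrank ℝ V = 2) {A B C O H : V}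
    (htri : AffineIndependent ℝ ![A, B, C]) (hO₁ : dist O A = dist O B)
    (hO₂ : dist O B = dist O C) (hH₁ : ⟪H - A, B - C⟫ = 0) (hH₂ : ⟪H - B, C - A⟫ = 0) :
    H - O = (A - O) + (B - O) + (C - O) := by
  rw [← sub_eq_zero]
  have hBC : ⟪H - O - ((A - O) + (B - O) + (C - O)), B - C⟫ = 0 := by
    rw [show H - O - ((A - O) + (B - O) + (C - O)) = (H - A) - ((B - O) + (C - O)) by abel,
      inner_sub_left, hH₁, inner_sub_add_sub_of_dist_eq hO₂, sub_zero]
  have hCA : ⟪H - O - ((A - O) + (B - O) + (C - O)), C - A⟫ = 0 := by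
    rw [show H - O - ((A - O) + (B - O) + (C - O)) = (H - B) - ((C - O) + (A - O)) by abel,
      inner_sub_left, hH₂, inner_sub_add_sub_of_dist_eq (hO₁.trans hO₂).symm, sub_zero]
  refine eq_zero_of_inner_sub_eq_zero_of_affineIndependent hV htri ?_ hCA
  rw [show B - A = (B - C) + (C - A) by abel, inner_add_right, hBC, hCA, add_zero]

theorem exists_foot_of_collinear_midpoint {B C P P' : V} (hBC : B ≠ C)
    (hM : Collinear ℝ {B, C, midpoint ℝ P P'}) (hperp : ⟪P - P', C - B⟫ = 0) :
    ∃ t : ℝ, t * ‖C - B‖ ^ 2 = ⟪P - B, C - B⟫ ∧ P' = 2 • (B + t • (C - B)) - P := by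
  obtain ⟨t, ht⟩ := mem_affineSpan_pair_iff_exists_lineMap_eq.mp
    (hM.mem_affineSpan_of_mem_of_ne (p₃ := midpoint ℝ P P') (by simp) (by simp) (by simp) hBC)
  have hP' : P' = 2 • (B + t • (C - B)) - P := by
    rw [AffineMap.lineMap_apply, eq_comm, midpoint_eq_iff, AffineEquiv.pointReflection_apply] at ht
    rw [← ht, vsub_eq_sub, vadd_eq_add, vadd_eq_add, vsub_eq_sub]
    module
  refine ⟨t, ?_, hP'⟩
  rw [hP', show P - (2 • (B + t • (C - B)) - P) = (2 : ℝ) • ((P - B) - t • (C - B)) by module,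
    inner_smul_left, inner_sub_left, real_inner_smul_left, real_inner_self_eq_norm_sq] at hperp
  simpa [sub_eq_zero, eq_comm] using hperp


theorem exists_reflection_sub_eq_smul (e : V ≃ₗᵢ[ℝ] ℂ) {A B C O P : V} {t : ℝ} (hBC : B ≠ C)
    (hA : ‖A - O‖ = ‖P - O‖) (hB : ‖B - O‖ = ‖P - O‖) (hC : ‖C - O‖ = ‖P - O‖)
    (ht : t * ‖C - B‖ ^ 2 = ⟪P - B, C - B⟫) {v : ℂ}
    (hv : v ^ 2 = e (A - O) * e (B - O) * e (C - O) / e (P - O)) :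
    ∃ r : ℝ, 2 • (B + t • (C - B)) - P - O - ((A - O) + (B - O) + (C - O)) = r • e.symm v := by
  have hsub : ∀ X Y : V, e (X - O) - e (Y - O) = e (X - Y) := fun X Y => by
    rw [← map_sub, sub_sub_sub_cancel_right]
  obtain ⟨r, hr⟩ := Complex.exists_reflection_sub_eq_ofReal_mul
    (e.injective.ne (sub_left_injective.ne hBC)) (by rwa [e.norm_map, e.norm_map])
    (by rwa [e.norm_map, e.norm_map]) (by rwa [e.norm_map, e.norm_map])
    (by rwa [hsub, hsub, e.norm_map, e.inner_map_map]) hv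
  refine ⟨r, e.injective ?_⟩
  rw [show 2 • (B + t • (C - B)) - P - O - ((A - O) + (B - O) + (C - O)) =
      2 • ((B - O) + t • ((C - O) - (B - O))) - (P - O) - ((A - O) + (B - O) + (C - O)) by
    module]
  simpa only [map_sub, map_add, map_nsmul, map_smul, LinearIsometryEquiv.apply_symm_apply,
    Complex.real_smul] using hr

theorem collinear_reflections_orthocenter (e : V ≃ₗᵢ[ℝ] ℂ) {A B C O H P P₁ P₂ P₃ : V}
    {t₁ t₂ t₃ : ℝ} (hAB : A ≠ B) (hBC : B ≠ C) (hCA : C ≠ A) (hA : ‖A - O‖ = ‖P - O‖)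
    (hB : ‖B - O‖ = ‖P - O‖) (hC : ‖C - O‖ = ‖P - O‖) (hH : H - O = (A - O) + (B - O) + (C - O))
    (ht₁ : t₁ * ‖C - B‖ ^ 2 = ⟪P - B, C - B⟫) (hP₁ : P₁ = 2 • (B + t₁ • (C - B)) - P)
    (ht₂ : t₂ * ‖A - C‖ ^ 2 = ⟪P - C, A - C⟫) (hP₂ : P₂ = 2 • (C + t₂ • (A - C)) - P)
    (ht₃ : t₃ * ‖B - A‖ ^ 2 = ⟪P - A, B - A⟫) (hP₃ : P₃ = 2 • (A + t₃ • (B - A)) - P) :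
    Collinear ℝ {P₁, P₂, P₃, H} := by
  obtain ⟨v, hv⟩ := IsAlgClosed.exists_eq_mul_self (e (A - O) * e (B - O) * e (C - O) / e (P - O))
  have hv₁ : v ^ 2 = e (A - O) * e (B - O) * e (C - O) / e (P - O) := by rw [hv, sq]
  have hv₂ : v ^ 2 = e (B - O) * e (C - O) * e (A - O) / e (P - O) := by rw [hv₁]; ring
  have hv₃ : v ^ 2 = e (C - O) * e (A - O) * e (B - O) / e (P - O) := by rw [hv₁]; ring
  obtain ⟨r₁, hr₁⟩ := exists_reflection_sub_eq_smul e hBC hA hB hC ht₁ hv₁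
  obtain ⟨r₂, hr₂⟩ := exists_reflection_sub_eq_smul e hCA hB hC hA ht₂ hv₂
  obtain ⟨r₃, hr₃⟩ := exists_reflection_sub_eq_smul e hAB hC hA hB ht₃ hv₃
  rw [collinear_iff_of_mem (p₀ := H) (by simp)]
  refine ⟨e.symm v, ?_⟩
  simp only [Set.mem_insert_iff, Set.mem_singleton_iff, forall_eq_or_imp, forall_eq, vadd_eq_add]
  refine ⟨⟨r₁, ?_⟩, ⟨r₂, ?_⟩, ⟨r₃, ?_⟩, ⟨0, by simp⟩⟩
  · rw [← hr₁, ← hH, hP₁]; abel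
  · rw [← hr₂, show (B - O) + (C - O) + (A - O) = H - O by rw [hH]; abel, hP₂]; abel
  · rw [← hr₃, show (C - O) + (A - O) + (B - O) = H - O by rw [hH]; abel, hP₃]; abel

end InnerProductSpace

/-- Steiner's theorem on reflected points: if a point `P` lies on the circumcircle
(centre `O`) of triangle `A B C`, then the three reflexions `P₁, P₂, P₃` of `P` in the
three edge-lines `BC`, `CA`, `AB` are collinear, and the line through them (the
Steiner line) passes through the orthocentre `H` of the triangle. -/
theorem stmt_10 (A B C O H P P₁ P₂ P₃ : EuclideanSpace ℝ (Fin 2))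
    (htri : AffineIndependent ℝ ![A, B, C])
    (hO1 : dist O A = dist O B) (hO2 : dist O B = dist O C)
    (hH1 : ⟪H - A, B - C⟫ = 0) (hH2 : ⟪H - B, C - A⟫ = 0)
    (hP : dist O P = dist O A)
    (hP₁ : Collinear ℝ ({B, C, midpoint ℝ P P₁} : Set (EuclideanSpace ℝ (Fin 2))) ∧
      ⟪P - P₁, C - B⟫ = 0)
    (hP₂ : Collinear ℝ ({C, A, midpoint ℝ P P₂} : Set (EuclideanSpace ℝ (Fin 2))) ∧
      ⟪P - P₂, A - C⟫ = 0)
    (hP₃ : Collinear ℝ ({A, B, midpoint ℝ P P₃} : Set (EuclideanSpace ℝ (Fin 2))) ∧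
      ⟪P - P₃, B - A⟫ = 0) :
    Collinear ℝ ({P₁, P₂, P₃, H} : Set (EuclideanSpace ℝ (Fin 2))) := by
  have hAB : A ≠ B := by simpa using htri.injective.ne (show (0 : Fin 3) ≠ 1 by decide)
  have hBC : B ≠ C := by simpa using htri.injective.ne (show (1 : Fin 3) ≠ 2 by decide)
  have hCA : C ≠ A := by simpa using htri.injective.ne (show (2 : Fin 3) ≠ 0 by decide)
  obtain ⟨t₁, ht₁, hP₁⟩ := exists_foot_of_collinear_midpoint hBC hP₁.1 hP₁.2
  obtain ⟨t₂, ht₂, hP₂⟩ := exists_foot_of_collinear_midpoint hCA hP₂.1 hP₂.2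
  obtain ⟨t₃, ht₃, hP₃⟩ := exists_foot_of_collinear_midpoint hAB hP₃.1 hP₃.2
  have hH := sub_eq_add_add_of_inner_eq_zero finrank_euclideanSpace_fin htri hO1 hO2 hH1 hH2
  rw [dist_eq_norm', dist_eq_norm'] at hO1 hO2 hP
  exact collinear_reflections_orthocenter Complex.orthonormalBasisOneI.repr.symm hAB hBC hCA
    (by linarith) (by linarith) (by linarith) hH
    ht₁ hP₁ ht₂ hP₂ ht₃ hP₃
end

section
/- Droz–Farny theorem: if two perpendicular lines through the orthocentre H of triangle ABC meet line BC at X₁, X₂, line CA at Y₁, Y₂, and line AB at Z₁, Z₂, then the midpoints of segments X₁X₂, Y₁Y₂, Z₁Z₂ are collinear. -/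
/-!
Put the orthocentre at the origin and let `a, b, c` be the vertices. The altitude conditions say
`⟪a, b⟫ = ⟪a, c⟫ = ⟪b, c⟫ =: k`, so the side line `BC` is `{p | ⟪a, p⟫ = k}`, and similarly for
the other sides; in the plane `k ≠ 0` because the triangle has no right angle. The line `ℝ u`
meets `BC` at `(k / ⟪u, a⟫) • u`, so the midpoint of `X₁X₂` is
`(k / 2) • (⟪u, a⟫⁻¹ • u + ⟪v, a⟫⁻¹ • v)`. Written in the coordinates `(⟪u, p⟫, ⟪v, p⟫)`, the
relations between `a, b, c` say that `A, B, C, H` lie on a rectangular hyperbola whose asymptotes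
are parallel to `u` and `v`; equivalently, the three points `(⟪u, p⟫⁻¹, ⟪v, p⟫⁻¹)` for
`p = a, b, c` are collinear, and so are the midpoints.
-/

open RealInnerProductSpace Module

theorem collinear_of_cross_eq_zero {k V : Type*} [Field k] [LinearOrder k]
    [IsStrictOrderedRing k] [AddCommGroup V] [Module k V] (p u v : V) {x₁ y₁ x₂ y₂ x₃ y₃ : k}
    (h : (x₂ - x₁) * (y₃ - y₁) = (x₃ - x₁) * (y₂ - y₁)) :
    Collinear k ({p + x₁ • u + y₁ • v, p + x₂ • u + y₂ • v, p + x₃ • u + y₃ • v} : Set V) := by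
  by_cases h₁₂ : x₂ = x₁ ∧ y₂ = y₁
  · obtain ⟨rfl, rfl⟩ := h₁₂
    rw [Set.insert_eq_of_mem (Set.mem_insert _ _)]
    exact collinear_pair k _ _
  rw [Set.pair_comm, Set.insert_comm]
  apply collinear_insert_of_mem_affineSpan_pair
  have hd : 0 < (x₂ - x₁) ^ 2 + (y₂ - y₁) ^ 2 := by
    by_contra! hle
    exact h₁₂ ⟨by nlinarith [sq_nonneg (x₂ - x₁), sq_nonneg (y₂ - y₁)],
      by nlinarith [sq_nonneg (x₂ - x₁), sq_nonneg (y₂ - y₁)]⟩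
  -- the coefficient of the projection of `(x₃ - x₁, y₃ - y₁)` onto `(x₂ - x₁, y₂ - y₁)`
  set r := ((x₂ - x₁) * (x₃ - x₁) + (y₂ - y₁) * (y₃ - y₁)) / ((x₂ - x₁) ^ 2 + (y₂ - y₁) ^ 2)
  have hx : r * (x₂ - x₁) = x₃ - x₁ := by
    simp only [r]
    field_simp
    linear_combination (y₂ - y₁) * h
  have hy : r * (y₂ - y₁) = y₃ - y₁ := by
    simp only [r]
    field_simp
    linear_combination -(x₂ - x₁) * h
  convert smul_vsub_vadd_mem_affineSpan_pair r (p + x₁ • u + y₁ • v) (p + x₂ • u + y₂ • v) using 1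
  rw [vsub_eq_sub, vadd_eq_add]
  linear_combination (norm := module) -hx • u - hy • v

theorem midpoint_add_smul_add_smul {V : Type*} [AddCommGroup V] [Module ℝ V] (p u v : V)
    (s t : ℝ) : midpoint ℝ (p + s • u) (p + t • v) = p + (s / 2) • u + (t / 2) • v := by
  rw [midpoint_eq_smul_add, invOf_eq_inv]
  module

section InnerProductSpace

variable {V : Type*} [NormedAddCommGroup V] [InnerProductSpace ℝ V]

theorem inner_sub_eq_zero_of_collinear {B C X n : V} (h : Collinear ℝ ({B, C, X} : Set V))
    (hBC : B ≠ C) (hn : ⟪n, C - B⟫ = 0) : ⟪n, X - B⟫ = 0 := by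
  have hX : X ∈ line[ℝ, B, C] := h.mem_affineSpan_of_mem_of_ne (by simp) (by simp) (by simp) hBC
  rw [← vsub_vadd X B, vadd_left_mem_affineSpan_pair] at hX
  obtain ⟨r, hr⟩ := hX
  rw [← vsub_eq_sub X B, ← hr, vsub_eq_sub, real_inner_smul_right, hn, mul_zero]

theorem mul_inner_eq_of_collinear {H b c u n : V} {t : ℝ}
    (h : Collinear ℝ ({H + b, H + c, H + t • u} : Set V)) (hbc : b ≠ c) (hn : ⟪n, c - b⟫ = 0) :
    t * ⟪u, n⟫ = ⟪n, b⟫ := by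
  have := inner_sub_eq_zero_of_collinear h (by simpa using hbc) (by simpa using hn)
  rwa [add_sub_add_left_eq_sub, inner_sub_right, real_inner_smul_right, real_inner_comm,
    sub_eq_zero] at this

end InnerProductSpace

section Plane

variable {V : Type*} [NormedAddCommGroup V] [InnerProductSpace ℝ V] [Fact (finrank ℝ V = 2)]
  {u v : V}

theorem eq_smul_add_smul_of_inner_eq_zero (hu : u ≠ 0) (hv : v ≠ 0) (huv : ⟪u, v⟫ = 0)
    (x : V) : x = (⟪u, x⟫ / ‖u‖ ^ 2) • u + (⟪v, x⟫ / ‖v‖ ^ 2) • v := by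
  have hperp : ⟪u, x - (⟪u, x⟫ / ‖u‖ ^ 2) • u⟫ = 0 := by
    rw [inner_sub_right, real_inner_smul_right, real_inner_self_eq_norm_sq]
    field_simp [norm_ne_zero_iff.mpr hu]
    ring
  obtain ⟨c, hc⟩ := Submodule.mem_span_singleton.mp
    (Submodule.mem_span_singleton_of_inner_eq_zero_of_inner_eq_zero hu hv hperp huv)
  have hcv : c = ⟪v, x⟫ / ‖v‖ ^ 2 := by
    have := congrArg (⟪v, ·⟫) hc
    simp only [real_inner_smul_right, inner_sub_right, real_inner_self_eq_norm_sq,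
      real_inner_comm u v, huv, mul_zero, sub_zero] at this
    field_simp [norm_ne_zero_iff.mpr hv]
    linarith
  rw [← hcv, hc, add_sub_cancel]

theorem inner_eq_add_of_inner_eq_zero (hu : u ≠ 0) (hv : v ≠ 0) (huv : ⟪u, v⟫ = 0) (x y : V) :
    ⟪x, y⟫ = ⟪u, x⟫ * ⟪u, y⟫ / ‖u‖ ^ 2 + ⟪v, x⟫ * ⟪v, y⟫ / ‖v‖ ^ 2 := by
  conv_lhs => rw [eq_smul_add_smul_of_inner_eq_zero hu hv huv x]
  rw [inner_add_left, real_inner_smul_left, real_inner_smul_left]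
  ring

theorem ne_zero_of_orthocentric {a b c : V} {k : ℝ} (hab : ⟪a, b⟫ = k) (hac : ⟪a, c⟫ = k)
    (hbc : ⟪b, c⟫ = k) (hA : ⟪b - a, c - a⟫ ≠ 0) (hB : ⟪a - b, c - b⟫ ≠ 0)
    (hC : ⟪a - c, b - c⟫ ≠ 0) : k ≠ 0 := by
  rintro rfl
  have ha₀ : a ≠ 0 := by rintro rfl; simp [hbc] at hA
  have hb₀ : b ≠ 0 := by rintro rfl; simp [hac] at hB
  have hc₀ : c = 0 := by simpa [hac, hbc] using eq_smul_add_smul_of_inner_eq_zero ha₀ hb₀ hab c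
  simp [hc₀, hab] at hC

theorem cross_eq_of_orthocentric (hu : u ≠ 0) (hv : v ≠ 0) (huv : ⟪u, v⟫ = 0) {a b c : V}
    {k xa ya xb yb xc yc : ℝ} (hk : k ≠ 0) (hab : ⟪a, b⟫ = k) (hac : ⟪a, c⟫ = k)
    (hbc : ⟪b, c⟫ = k) (hxa : xa * ⟪u, a⟫ = k) (hya : ya * ⟪v, a⟫ = k)
    (hxb : xb * ⟪u, b⟫ = k) (hyb : yb * ⟪v, b⟫ = k) (hxc : xc * ⟪u, c⟫ = k)
    (hyc : yc * ⟪v, c⟫ = k) :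
    (xb - xa) * (yc - ya) = (xc - xa) * (yb - ya) := by
  have hcab := inner_eq_add_of_inner_eq_zero hu hv huv c (a - b)
  have hbac := inner_eq_add_of_inner_eq_zero hu hv huv b (a - c)
  simp only [inner_sub_right] at hcab hbac
  rw [real_inner_comm a c, real_inner_comm b c, hac, hbc, sub_self] at hcab
  rw [real_inner_comm a b, hab, hbc, sub_self] at hbac
  have hN : (⟪u, a⟫ - ⟪u, b⟫) * (⟪v, a⟫ - ⟪v, c⟫) * ⟪u, c⟫ * ⟪v, b⟫ =
      (⟪u, a⟫ - ⟪u, c⟫) * (⟪v, a⟫ - ⟪v, b⟫) * ⟪u, b⟫ * ⟪v, c⟫ := by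
    field_simp [norm_ne_zero_iff.mpr hu, norm_ne_zero_iff.mpr hv] at hcab hbac
    refine mul_left_cancel₀ (pow_ne_zero 2 (norm_ne_zero_iff.mpr hv)) ?_
    linear_combination (⟪v, a⟫ - ⟪v, b⟫) * ⟪v, c⟫ * hbac - (⟪v, a⟫ - ⟪v, c⟫) * ⟪v, b⟫ * hcab
  have hua : ⟪u, a⟫ ≠ 0 := right_ne_zero_of_mul (hxa ▸ hk)
  have hva : ⟪v, a⟫ ≠ 0 := right_ne_zero_of_mul (hya ▸ hk)
  have hub : ⟪u, b⟫ ≠ 0 := right_ne_zero_of_mul (hxb ▸ hk)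
  have hvb : ⟪v, b⟫ ≠ 0 := right_ne_zero_of_mul (hyb ▸ hk)
  have huc : ⟪u, c⟫ ≠ 0 := right_ne_zero_of_mul (hxc ▸ hk)
  have hvc : ⟪v, c⟫ ≠ 0 := right_ne_zero_of_mul (hyc ▸ hk)
  rw [eq_div_of_mul_eq hua hxa, eq_div_of_mul_eq hva hya, eq_div_of_mul_eq hub hxb,
    eq_div_of_mul_eq hvb hyb, eq_div_of_mul_eq huc hxc, eq_div_of_mul_eq hvc hyc]
  field_simp
  linear_combination hN

theorem collinear_midpoints_of_orthocentric (hu : u ≠ 0) (hv : v ≠ 0) (huv : ⟪u, v⟫ = 0)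
    {H a b c : V} {k xa ya xb yb xc yc : ℝ} (hab : ⟪a, b⟫ = k) (hac : ⟪a, c⟫ = k)
    (hbc : ⟪b, c⟫ = k) (hA : ⟪b - a, c - a⟫ ≠ 0) (hB : ⟪a - b, c - b⟫ ≠ 0)
    (hC : ⟪a - c, b - c⟫ ≠ 0)
    (hX₁ : Collinear ℝ ({H + b, H + c, H + xa • u} : Set V))
    (hX₂ : Collinear ℝ ({H + b, H + c, H + ya • v} : Set V))
    (hY₁ : Collinear ℝ ({H + c, H + a, H + xb • u} : Set V))
    (hY₂ : Collinear ℝ ({H + c, H + a, H + yb • v} : Set V))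
    (hZ₁ : Collinear ℝ ({H + a, H + b, H + xc • u} : Set V))
    (hZ₂ : Collinear ℝ ({H + a, H + b, H + yc • v} : Set V)) :
    Collinear ℝ ({midpoint ℝ (H + xa • u) (H + ya • v), midpoint ℝ (H + xb • u) (H + yb • v),
      midpoint ℝ (H + xc • u) (H + yc • v)} : Set V) := by
  have hk := ne_zero_of_orthocentric hab hac hbc hA hB hC
  have hBC : b ≠ c := by rintro rfl; simp at hB
  have hCA : c ≠ a := by rintro rfl; simp at hC
  have hAB : a ≠ b := by rintro rfl; simp at hA
  have ha : ⟪a, c - b⟫ = 0 := by rw [inner_sub_right, hac, hab, sub_self]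
  have hb : ⟪b, a - c⟫ = 0 := by rw [inner_sub_right, real_inner_comm a b, hab, hbc, sub_self]
  have hc : ⟪c, b - a⟫ = 0 := by
    rw [inner_sub_right, real_inner_comm b c, real_inner_comm a c, hbc, hac, sub_self]
  have hca : ⟪c, a⟫ = k := (real_inner_comm a c).trans hac
  have hxa := (mul_inner_eq_of_collinear hX₁ hBC ha).trans hab
  have hya := (mul_inner_eq_of_collinear hX₂ hBC ha).trans hab
  have hxb := (mul_inner_eq_of_collinear hY₁ hCA hb).trans hbc
  have hyb := (mul_inner_eq_of_collinear hY₂ hCA hb).trans hbc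
  have hxc := (mul_inner_eq_of_collinear hZ₁ hAB hc).trans hca
  have hyc := (mul_inner_eq_of_collinear hZ₂ hAB hc).trans hca
  rw [midpoint_add_smul_add_smul, midpoint_add_smul_add_smul, midpoint_add_smul_add_smul]
  apply collinear_of_cross_eq_zero
  linear_combination (1 / 4 : ℝ) *
    cross_eq_of_orthocentric hu hv huv hk hab hac hbc hxa hya hxb hyb hxc hyc

end Plane

theorem stmt_11_general (A B C H u v X₁ X₂ Y₁ Y₂ Z₁ Z₂ : EuclideanSpace ℝ (Fin 2))
    (hH1 : ⟪H - A, B - C⟫ = 0) (hH2 : ⟪H - B, C - A⟫ = 0)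
    (hnrA : ⟪B - A, C - A⟫ ≠ 0) (hnrB : ⟪A - B, C - B⟫ ≠ 0)
    (hnrC : ⟪A - C, B - C⟫ ≠ 0)
    (hu : u ≠ 0) (hv : v ≠ 0) (huv : ⟪u, v⟫ = 0)
    (hX₁ : Collinear ℝ ({B, C, X₁} : Set (EuclideanSpace ℝ (Fin 2))) ∧
      ∃ t : ℝ, X₁ = H + t • u)
    (hX₂ : Collinear ℝ ({B, C, X₂} : Set (EuclideanSpace ℝ (Fin 2))) ∧
      ∃ t : ℝ, X₂ = H + t • v)
    (hY₁ : Collinear ℝ ({C, A, Y₁} : Set (EuclideanSpace ℝ (Fin 2))) ∧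
      ∃ t : ℝ, Y₁ = H + t • u)
    (hY₂ : Collinear ℝ ({C, A, Y₂} : Set (EuclideanSpace ℝ (Fin 2))) ∧
      ∃ t : ℝ, Y₂ = H + t • v)
    (hZ₁ : Collinear ℝ ({A, B, Z₁} : Set (EuclideanSpace ℝ (Fin 2))) ∧
      ∃ t : ℝ, Z₁ = H + t • u)
    (hZ₂ : Collinear ℝ ({A, B, Z₂} : Set (EuclideanSpace ℝ (Fin 2))) ∧
      ∃ t : ℝ, Z₂ = H + t • v) :
    Collinear ℝ ({midpoint ℝ X₁ X₂, midpoint ℝ Y₁ Y₂, midpoint ℝ Z₁ Z₂} :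
      Set (EuclideanSpace ℝ (Fin 2))) := by
  have : Fact (finrank ℝ (EuclideanSpace ℝ (Fin 2)) = 2) := ⟨finrank_euclideanSpace_fin⟩
  obtain ⟨hX₁, xa, rfl⟩ := hX₁
  obtain ⟨hX₂, ya, rfl⟩ := hX₂
  obtain ⟨hY₁, xb, rfl⟩ := hY₁
  obtain ⟨hY₂, yb, rfl⟩ := hY₂
  obtain ⟨hZ₁, xc, rfl⟩ := hZ₁
  obtain ⟨hZ₂, yc, rfl⟩ := hZ₂
  obtain ⟨a, rfl⟩ : ∃ a, A = H + a := ⟨A - H, by abel⟩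
  obtain ⟨b, rfl⟩ : ∃ b, B = H + b := ⟨B - H, by abel⟩
  obtain ⟨c, rfl⟩ : ∃ c, C = H + c := ⟨C - H, by abel⟩
  simp only [add_sub_add_left_eq_sub] at hnrA hnrB hnrC
  simp only [add_sub_add_left_eq_sub, sub_add_cancel_left, inner_neg_left, inner_sub_right]
    at hH1 hH2
  have hac : ⟪a, c⟫ = ⟪a, b⟫ := by linarith
  have hbc : ⟪b, c⟫ = ⟪a, b⟫ := by linarith [real_inner_comm a b]
  exact collinear_midpoints_of_orthocentric hu hv huv rfl hac hbc hnrA hnrB hnrC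
    hX₁ hX₂ hY₁ hY₂ hZ₁ hZ₂

/-- Droz–Farny theorem: if two perpendicular lines through the orthocentre `H` of a
(non-right-angled) triangle `A B C`, with direction vectors `u ⊥ v`, meet line `BC` at
`X₁, X₂`, line `CA` at `Y₁, Y₂`, and line `AB` at `Z₁, Z₂`, then the midpoints of the
segments `X₁X₂`, `Y₁Y₂`, `Z₁Z₂` are collinear. -/
theorem stmt_11 (A B C H u v X₁ X₂ Y₁ Y₂ Z₁ Z₂ : EuclideanSpace ℝ (Fin 2))
    (htri : AffineIndependent ℝ ![A, B, C])
    (hH1 : ⟪H - A, B - C⟫ = 0) (hH2 : ⟪H - B, C - A⟫ = 0)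
    (hnrA : ⟪B - A, C - A⟫ ≠ 0) (hnrB : ⟪A - B, C - B⟫ ≠ 0)
    (hnrC : ⟪A - C, B - C⟫ ≠ 0)
    (hu : u ≠ 0) (hv : v ≠ 0) (huv : ⟪u, v⟫ = 0)
    (hX₁ : Collinear ℝ ({B, C, X₁} : Set (EuclideanSpace ℝ (Fin 2))) ∧
      ∃ t : ℝ, X₁ = H + t • u)
    (hX₂ : Collinear ℝ ({B, C, X₂} : Set (EuclideanSpace ℝ (Fin 2))) ∧
      ∃ t : ℝ, X₂ = H + t • v)
    (hY₁ : Collinear ℝ ({C, A, Y₁} : Set (EuclideanSpace ℝ (Fin 2))) ∧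
      ∃ t : ℝ, Y₁ = H + t • u)
    (hY₂ : Collinear ℝ ({C, A, Y₂} : Set (EuclideanSpace ℝ (Fin 2))) ∧
      ∃ t : ℝ, Y₂ = H + t • v)
    (hZ₁ : Collinear ℝ ({A, B, Z₁} : Set (EuclideanSpace ℝ (Fin 2))) ∧
      ∃ t : ℝ, Z₁ = H + t • u)
    (hZ₂ : Collinear ℝ ({A, B, Z₂} : Set (EuclideanSpace ℝ (Fin 2))) ∧
      ∃ t : ℝ, Z₂ = H + t • v) :
    Collinear ℝ ({midpoint ℝ X₁ X₂, midpoint ℝ Y₁ Y₂, midpoint ℝ Z₁ Z₂} :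
      Set (EuclideanSpace ℝ (Fin 2))) :=
  stmt_11_general A B C H u v X₁ X₂ Y₁ Y₂ Z₁ Z₂ hH1 hH2 hnrA hnrB hnrC hu hv huv hX₁ hX₂ hY₁ hY₂ hZ₁
    hZ₂
end

section
/- Lighthouse theorem for n = 2: given two points E and F, if two pairs of perpendicular lines, one pair through E and one pair through F, intersect in four points, then these four points form an orthocentric system; in particular the angle-bisectors at E and F of the triangle DEF (D the fourth intersection) concur four-at-a-time at the incentre and three excentres. -/
/-!
Two of the three perpendicularities are immediate: `P₁₁ - P₁₂` and `P₂₁ - P₂₂` are chords of the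
perpendicular lines through `E`, while `P₁₁ - P₂₁` and `P₁₂ - P₂₂` are chords of the perpendicular
lines through `F`. The third follows from the first two by the identity
`⟪A - B, C - D⟫ + ⟪A - C, D - B⟫ + ⟪A - D, B - C⟫ = 0`, which holds for any four points.
-/

open RealInnerProductSpace

lemma sub_eq_smul_of_mem_line {R M : Type*} [Ring R] [AddCommGroup M] [Module R M]
    {E u P Q : M} (hP : ∃ s : R, P = E + s • u) (hQ : ∃ s : R, Q = E + s • u) :
    ∃ r : R, P - Q = r • u := by
  obtain ⟨s, rfl⟩ := hP
  obtain ⟨s', rfl⟩ := hQ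
  exact ⟨s - s', by rw [sub_smul, add_sub_add_left_eq_sub]⟩

section

variable {V : Type*} [NormedAddCommGroup V] [InnerProductSpace ℝ V]

lemma inner_sub_sub_eq_zero_of_mem_perp_lines {E F u w P Q R S : V} (huw : ⟪u, w⟫ = 0)
    (hP : ∃ s : ℝ, P = E + s • u) (hQ : ∃ s : ℝ, Q = E + s • u)
    (hR : ∃ t : ℝ, R = F + t • w) (hS : ∃ t : ℝ, S = F + t • w) :
    ⟪P - Q, R - S⟫ = 0 := by
  obtain ⟨r, hr⟩ := sub_eq_smul_of_mem_line hP hQ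
  obtain ⟨r', hr'⟩ := sub_eq_smul_of_mem_line hR hS
  rw [hr, hr', real_inner_smul_left, real_inner_smul_right, huw, mul_zero, mul_zero]

lemma inner_sub_sub_add_inner_sub_sub_add_inner_sub_sub (A B C D : V) :
    ⟪A - B, C - D⟫ + ⟪A - C, D - B⟫ + ⟪A - D, B - C⟫ = 0 := by
  simp only [inner_sub_left, inner_sub_right, real_inner_comm B C, real_inner_comm B D,
    real_inner_comm C D]
  ring

lemma inner_sub_sub_eq_zero_of_inner_sub_sub_eq_zero {A B C D : V} (hAB : ⟪A - B, C - D⟫ = 0)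
    (hAC : ⟪A - C, B - D⟫ = 0) : ⟪A - D, B - C⟫ = 0 := by
  have h := inner_sub_sub_add_inner_sub_sub_add_inner_sub_sub A B C D
  rw [← neg_sub B D, inner_neg_right, hAB, hAC] at h
  linarith

end

theorem stmt_13_general (E F u₁ u₂ v₁ v₂ P₁₁ P₁₂ P₂₁ P₂₂ : EuclideanSpace ℝ (Fin 2))
    (hu : ⟪u₁, u₂⟫ = 0) (hv : ⟪v₁, v₂⟫ = 0)
    (h11 : (∃ s : ℝ, P₁₁ = E + s • u₁) ∧ ∃ t : ℝ, P₁₁ = F + t • v₁)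
    (h12 : (∃ s : ℝ, P₁₂ = E + s • u₁) ∧ ∃ t : ℝ, P₁₂ = F + t • v₂)
    (h21 : (∃ s : ℝ, P₂₁ = E + s • u₂) ∧ ∃ t : ℝ, P₂₁ = F + t • v₁)
    (h22 : (∃ s : ℝ, P₂₂ = E + s • u₂) ∧ ∃ t : ℝ, P₂₂ = F + t • v₂) :
    ⟪P₁₁ - P₁₂, P₂₁ - P₂₂⟫ = 0 ∧ ⟪P₁₁ - P₂₁, P₁₂ - P₂₂⟫ = 0 ∧
    ⟪P₁₁ - P₂₂, P₁₂ - P₂₁⟫ = 0 := by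
  have through_E := inner_sub_sub_eq_zero_of_mem_perp_lines hu h11.1 h12.1 h21.1 h22.1
  have through_F := inner_sub_sub_eq_zero_of_mem_perp_lines hv h11.2 h21.2 h12.2 h22.2
  exact ⟨through_E, through_F, inner_sub_sub_eq_zero_of_inner_sub_sub_eq_zero through_E through_F⟩

/-- Lighthouse theorem for `n = 2`: given two points `E` and `F`, a pair of
perpendicular lines through `E` (directions `u₁ ⊥ u₂`) and a pair of perpendicular
lines through `F` (directions `v₁ ⊥ v₂`) intersect in four points `P₁₁, P₁₂, P₂₁, P₂₂`
(`Pᵢⱼ` on the `i`-th line through `E` and the `j`-th line through `F`); these four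
points form an orthocentric system: the joins of the three complementary pairs are
mutually perpendicular, so each point is the orthocentre of the triangle formed by
the other three (whence the angle-bisectors at `E` and `F` of the triangle `DEF`
concur four-at-a-time at the incentre and the three excentres). -/
theorem stmt_13 (E F u₁ u₂ v₁ v₂ P₁₁ P₁₂ P₂₁ P₂₂ : EuclideanSpace ℝ (Fin 2))
    (hu₁ : u₁ ≠ 0) (hu₂ : u₂ ≠ 0) (hu : ⟪u₁, u₂⟫ = 0)
    (hv₁ : v₁ ≠ 0) (hv₂ : v₂ ≠ 0) (hv : ⟪v₁, v₂⟫ = 0)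
    (h11 : (∃ s : ℝ, P₁₁ = E + s • u₁) ∧ ∃ t : ℝ, P₁₁ = F + t • v₁)
    (h12 : (∃ s : ℝ, P₁₂ = E + s • u₁) ∧ ∃ t : ℝ, P₁₂ = F + t • v₂)
    (h21 : (∃ s : ℝ, P₂₁ = E + s • u₂) ∧ ∃ t : ℝ, P₂₁ = F + t • v₁)
    (h22 : (∃ s : ℝ, P₂₂ = E + s • u₂) ∧ ∃ t : ℝ, P₂₂ = F + t • v₂) :
    ⟪P₁₁ - P₁₂, P₂₁ - P₂₂⟫ = 0 ∧ ⟪P₁₁ - P₂₁, P₁₂ - P₂₂⟫ = 0 ∧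
    ⟪P₁₁ - P₂₂, P₁₂ - P₂₁⟫ = 0 :=
  stmt_13_general E F u₁ u₂ v₁ v₂ P₁₁ P₁₂ P₂₁ P₂₂ hu hv h11 h12 h21 h22
end

section
/- The incentres of the four triangles formed by a cyclic quadrangle lie at the vertices of a rectangle: if points P₀P₁P₂P₃ lie on a circle, then the incentres of triangles P₁P₂P₃, P₀P₂P₃, P₀P₁P₃, P₀P₁P₂ form a rectangle. -/
/-!
Put the circle in `ℂ` and write `Pₖ = c + r e^{2iψₖ}`. The crossing diagonals say that `P₁` and
`P₃` lie on opposite sides of the chord `P₀P₂`, which lets us choose the half-angles with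
`ψ₀ ≤ ψ₁ ≤ ψ₂ ≤ ψ₃ ≤ ψ₀ + π`, up to reversing `P₁P₂P₃`. Then every side is `2r sin (ψⱼ - ψᵢ)`,
and with `uₖ = e^{iψₖ}` the incentre of the triangle with half-angles `ψ ≤ φ ≤ χ ≤ ψ + π` is
`c + r (u_ψ u_φ + u_φ u_χ - u_ψ u_χ)`. In these coordinates the four incentres form a
parallelogram by a ring identity, and its diagonals have equal length because `conj uₖ = uₖ⁻¹`.
-/

/-- The incentre of a triangle `X Y Z`, as the convex combination of the vertices
weighted by the lengths of the opposite sides. -/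
noncomputable def incenter (X Y Z : EuclideanSpace ℝ (Fin 2)) : EuclideanSpace ℝ (Fin 2) :=
  (dist Y Z + dist Z X + dist X Y)⁻¹ •
    (dist Y Z • X + dist Z X • Y + dist X Y • Z)

open Complex Set ComplexConjugate
open scoped Real

def IsRectangle {V : Type*} [NormedAddCommGroup V] (a b c d : V) : Prop :=
  b - a = c - d ∧ dist a c = dist b d

theorem IsRectangle.of_reverse {V : Type*} [NormedAddCommGroup V] {a b c d : V}
    (h : IsRectangle a d c b) : IsRectangle a b c d :=
  ⟨sub_eq_sub_iff_add_eq_add.2 ((add_comm b d).trans (sub_eq_sub_iff_add_eq_add.1 h.1)),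
    h.2.trans (dist_comm d b)⟩

theorem IsRectangle.of_map {V W : Type*} [NormedAddCommGroup V] [NormedSpace ℝ V]
    [NormedAddCommGroup W] [NormedSpace ℝ W] (f : V →ₗᵢ[ℝ] W) {a b c d : V}
    (h : IsRectangle (f a) (f b) (f c) (f d)) : IsRectangle a b c d := by
  refine ⟨f.injective ?_, ?_⟩
  · simpa only [map_sub] using h.1
  · simpa only [f.dist_map] using h.2

noncomputable def complexIncenter (X Y Z : ℂ) : ℂ :=
  (dist Y Z + dist Z X + dist X Y)⁻¹ • (dist Y Z • X + dist Z X • Y + dist X Y • Z)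

theorem map_incenter (f : EuclideanSpace ℝ (Fin 2) →ₗᵢ[ℝ] ℂ) (X Y Z : EuclideanSpace ℝ (Fin 2)) :
    f (incenter X Y Z) = complexIncenter (f X) (f Y) (f Z) := by
  simp only [incenter, complexIncenter, map_smul, map_add, f.dist_map]

theorem complexIncenter_comm_right (X Y Z : ℂ) :
    complexIncenter X Z Y = complexIncenter X Y Z := by
  rw [complexIncenter, complexIncenter, dist_comm Z Y, dist_comm Y X, dist_comm X Z]
  ac_rfl

theorem complexIncenter_reverse (X Y Z : ℂ) : complexIncenter Z Y X = complexIncenter X Y Z := by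
  rw [complexIncenter, complexIncenter, dist_comm Z Y, dist_comm Y X, dist_comm X Z]
  ac_rfl

theorem exp_two_mul_sub_exp_two_mul (ψ φ : ℝ) :
    exp (↑(2 * φ) * I) - exp (↑(2 * ψ) * I) =
      ↑(2 * Real.sin (φ - ψ)) * (I * exp (↑(ψ + φ) * I)) := by
  have hφ : exp (↑(2 * φ) * I) = exp (↑(ψ + φ) * I) * exp (↑(φ - ψ) * I) := by
    rw [← Complex.exp_add]; push_cast; ring_nf
  have hψ : exp (↑(2 * ψ) * I) = exp (↑(ψ + φ) * I) * exp (-(↑(φ - ψ) * I)) := by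
    rw [← Complex.exp_add]; push_cast; ring_nf
  rw [hφ, hψ, Complex.ofReal_mul, Complex.ofReal_sin, Complex.sin, neg_mul, Complex.ofReal_ofNat]
  linear_combination (exp (↑(ψ + φ) * I) * (exp (↑(φ - ψ) * I) - exp (-(↑(φ - ψ) * I)))) * I_sq

theorem circleMap_two_mul_sub (c : ℂ) (r ψ φ : ℝ) :
    circleMap c r (2 * φ) - circleMap c r (2 * ψ) =
      ↑(2 * r * Real.sin (φ - ψ)) * (I * exp (↑(ψ + φ) * I)) := by
  have := exp_two_mul_sub_exp_two_mul ψ φ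
  simp only [circleMap]
  push_cast at this ⊢
  linear_combination (r : ℂ) * this

theorem dist_circleMap_two_mul {c : ℂ} {r ψ φ : ℝ} (hr : 0 ≤ r) (h : ψ ≤ φ) (h' : φ ≤ ψ + π) :
    dist (circleMap c r (2 * ψ)) (circleMap c r (2 * φ)) = 2 * r * Real.sin (φ - ψ) := by
  have := Real.sin_nonneg_of_nonneg_of_le_pi (sub_nonneg.2 h) (by linarith)
  rw [dist_comm, dist_eq_norm, circleMap_two_mul_sub, norm_mul, norm_mul, Complex.norm_I,
    Complex.norm_exp_ofReal_mul_I, Complex.norm_real, Real.norm_of_nonneg (by positivity)]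
  ring

theorem circleMap_two_mul_eq (c : ℂ) (r ψ : ℝ) :
    circleMap c r (2 * ψ) = c + r * exp (ψ * I) ^ 2 := by
  rw [circleMap, ← Complex.exp_nat_mul]; push_cast; ring_nf

theorem sin_ofReal_sub (ψ φ : ℝ) :
    sin (φ - ψ) = (exp (ψ * I) / exp (φ * I) - exp (φ * I) / exp (ψ * I)) * I / 2 := by
  simp only [Complex.sin, sub_mul, neg_sub, Complex.exp_sub]

theorem complexIncenter_circleMap_two_mul {c : ℂ} {r ψ φ χ : ℝ} (hr : 0 ≤ r) (hψφ : ψ ≤ φ)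
    (hφχ : φ ≤ χ) (hχψ : χ ≤ ψ + π)
    (hne : ¬(circleMap c r (2 * ψ) = circleMap c r (2 * φ) ∧
      circleMap c r (2 * φ) = circleMap c r (2 * χ))) :
    complexIncenter (circleMap c r (2 * ψ)) (circleMap c r (2 * φ)) (circleMap c r (2 * χ)) =
      c + r * (exp (ψ * I) * exp (φ * I) + exp (φ * I) * exp (χ * I) -
        exp (ψ * I) * exp (χ * I)) := by
  have hperim : dist (circleMap c r (2 * φ)) (circleMap c r (2 * χ)) +
      dist (circleMap c r (2 * χ)) (circleMap c r (2 * ψ)) +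
      dist (circleMap c r (2 * ψ)) (circleMap c r (2 * φ)) ≠ 0 := by
    rcases not_and_or.mp hne with h | h
    · have := dist_pos.2 h; positivity
    · have := dist_pos.2 h; positivity
  rw [complexIncenter, inv_smul_eq_iff₀ hperim, dist_comm (circleMap c r (2 * χ)),
    dist_circleMap_two_mul hr hψφ (by linarith), dist_circleMap_two_mul hr hφχ (by linarith),
    dist_circleMap_two_mul hr (hψφ.trans hφχ) hχψ]
  simp only [circleMap_two_mul_eq, Complex.real_smul]
  push_cast
  rw [sin_ofReal_sub ψ φ, sin_ofReal_sub φ χ, sin_ofReal_sub ψ χ]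
  field_simp
  ring

theorem norm_eq_norm_of_mul_conj_eq {z w : ℂ} (h : z * conj z = w * conj w) : ‖z‖ = ‖w‖ := by
  rw [Complex.mul_conj', Complex.mul_conj'] at h
  exact (pow_left_inj₀ (norm_nonneg z) (norm_nonneg w) two_ne_zero).1 (by exact_mod_cast h)

theorem norm_sub_eq_norm_sub_of_norm_eq_one {u₀ u₁ u₂ u₃ : ℂ} (h₀ : ‖u₀‖ = 1) (h₁ : ‖u₁‖ = 1)
    (h₂ : ‖u₂‖ = 1) (h₃ : ‖u₃‖ = 1) :
    ‖(u₁ * u₂ + u₂ * u₃ - u₁ * u₃) - (u₀ * u₁ + u₁ * u₃ - u₀ * u₃)‖ =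
      ‖(u₀ * u₂ + u₂ * u₃ - u₀ * u₃) - (u₀ * u₁ + u₁ * u₂ - u₀ * u₂)‖ := by
  have hne : ∀ {u : ℂ}, ‖u‖ = 1 → u ≠ 0 := fun hu h => by simp [h] at hu
  apply norm_eq_norm_of_mul_conj_eq
  simp only [map_sub, map_add, map_mul, ← Complex.inv_eq_conj h₀, ← Complex.inv_eq_conj h₁,
    ← Complex.inv_eq_conj h₂, ← Complex.inv_eq_conj h₃]
  field_simp [hne h₀, hne h₁, hne h₂, hne h₃]
  ring

theorem isRectangle_complexIncenter_of_sorted {c p₀ p₁ p₂ p₃ : ℂ} {r ψ₀ ψ₁ ψ₂ ψ₃ : ℝ}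
    (hr : 0 ≤ r) (hp₀ : circleMap c r (2 * ψ₀) = p₀) (hp₁ : circleMap c r (2 * ψ₁) = p₁)
    (hp₂ : circleMap c r (2 * ψ₂) = p₂) (hp₃ : circleMap c r (2 * ψ₃) = p₃)
    (h₀₁ : ψ₀ ≤ ψ₁) (h₁₂ : ψ₁ ≤ ψ₂) (h₂₃ : ψ₂ ≤ ψ₃) (h₃₀ : ψ₃ ≤ ψ₀ + π)
    (h₀₂ : p₀ ≠ p₂) (h₁₃ : p₁ ≠ p₃) :
    IsRectangle (complexIncenter p₁ p₂ p₃) (complexIncenter p₀ p₂ p₃)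
      (complexIncenter p₀ p₁ p₃) (complexIncenter p₀ p₁ p₂) := by
  subst hp₀ hp₁ hp₂ hp₃
  rw [complexIncenter_circleMap_two_mul hr h₁₂ h₂₃ (by linarith) fun h => h₁₃ (h.1.trans h.2),
    complexIncenter_circleMap_two_mul hr (h₀₁.trans h₁₂) h₂₃ h₃₀ fun h => h₀₂ h.1,
    complexIncenter_circleMap_two_mul hr h₀₁ (h₁₂.trans h₂₃) h₃₀ fun h => h₁₃ h.2,
    complexIncenter_circleMap_two_mul hr h₀₁ h₁₂ (by linarith) fun h => h₀₂ (h.1.trans h.2)]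
  constructor
  · ring
  · simp only [dist_eq_norm, add_sub_add_left_eq_sub, ← mul_sub, norm_mul]
    rw [norm_sub_eq_norm_sub_of_norm_eq_one] <;> exact Complex.norm_exp_ofReal_mul_I _

theorem circleMap_two_mul_eq_of_sub_eq_int_mul {c : ℂ} {r θ ψ : ℝ} {n : ℤ}
    (h : θ / 2 - ψ = n * π) : circleMap c r (2 * ψ) = circleMap c r θ := by
  rw [show θ = 2 * ψ + n * (2 * π) by linarith]
  exact ((periodic_circleMap c r).int_mul n (2 * ψ)).symm

theorem exists_circleMap_eq {c p : ℂ} {r : ℝ} (h : dist c p = r) : ∃ θ, circleMap c r θ = p := by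
  have hr : 0 ≤ r := h ▸ dist_nonneg
  rw [← mem_range, range_circleMap, abs_of_nonneg hr, Metric.mem_sphere, dist_comm, h]

theorem exists_mem_Ico_circleMap_two_mul_eq {c p : ℂ} {r : ℝ} (h : dist c p = r) (a : ℝ) :
    ∃ ψ ∈ Ico a (a + π), circleMap c r (2 * ψ) = p := by
  obtain ⟨θ, rfl⟩ := exists_circleMap_eq h
  exact ⟨_, toIcoMod_mem_Ico Real.pi_pos a (θ / 2),
    circleMap_two_mul_eq_of_sub_eq_int_mul (self_sub_toIcoMod_eq_mul _ _ _)⟩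

theorem exists_mem_Ioc_circleMap_two_mul_eq {c p : ℂ} {r : ℝ} (h : dist c p = r) (a : ℝ) :
    ∃ ψ ∈ Ioc a (a + π), circleMap c r (2 * ψ) = p := by
  obtain ⟨θ, rfl⟩ := exists_circleMap_eq h
  exact ⟨_, toIocMod_mem_Ioc Real.pi_pos a (θ / 2),
    circleMap_two_mul_eq_of_sub_eq_int_mul (self_sub_toIocMod_eq_mul _ _ _)⟩

theorem exists_pos_im_mul_conj_eq_zero_of_sbtw {p₀ p₁ p₂ p₃ x : ℂ} (h₀₂ : Wbtw ℝ p₀ x p₂)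
    (h₁₃ : Sbtw ℝ p₁ x p₃) : ∃ a b : ℝ, 0 < a ∧ 0 < b ∧
      a * ((p₁ - p₀) * conj (p₂ - p₀)).im + b * ((p₃ - p₀) * conj (p₂ - p₀)).im = 0 := by
  obtain ⟨t, -, rfl⟩ := h₀₂
  obtain ⟨s, ⟨hs₀, hs₁⟩, hs⟩ := h₁₃.mem_image_Ioo
  have h : (1 - s : ℝ) * ((p₁ - p₀) * conj (p₂ - p₀)) + (s : ℝ) * ((p₃ - p₀) * conj (p₂ - p₀)) =
      (t * normSq (p₂ - p₀) : ℝ) := by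
    simp only [AffineMap.lineMap_apply_module, Complex.real_smul] at hs
    push_cast at hs ⊢
    rw [← Complex.mul_conj]
    linear_combination conj (p₂ - p₀) * hs
  refine ⟨1 - s, s, by linarith, hs₀, ?_⟩
  simpa only [Complex.add_im, Complex.im_ofReal_mul, Complex.ofReal_im] using congrArg Complex.im h

theorem im_circleMap_sub_mul_conj (c : ℂ) (r ψ₀ ψ ψ₂ : ℝ) :
    ((circleMap c r (2 * ψ) - circleMap c r (2 * ψ₀)) *
      conj (circleMap c r (2 * ψ₂) - circleMap c r (2 * ψ₀))).im =
      4 * r ^ 2 * Real.sin (ψ₂ - ψ₀) * (Real.sin (ψ - ψ₀) * Real.sin (ψ - ψ₂)) := by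
  have h : (circleMap c r (2 * ψ) - circleMap c r (2 * ψ₀)) *
      conj (circleMap c r (2 * ψ₂) - circleMap c r (2 * ψ₀)) =
      ((4 * r ^ 2 * Real.sin (ψ₂ - ψ₀) * Real.sin (ψ - ψ₀) : ℝ) : ℂ) * exp (↑(ψ - ψ₂) * I) := by
    rw [circleMap_two_mul_sub, circleMap_two_mul_sub, map_mul, map_mul, Complex.conj_ofReal,
      Complex.conj_I, ← Complex.exp_conj, map_mul, Complex.conj_ofReal, Complex.conj_I,
      show ↑(ψ - ψ₂) * I = ↑(ψ₀ + ψ) * I + ↑(ψ₀ + ψ₂) * -I by push_cast; ring, Complex.exp_add]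
    push_cast
    ring_nf
    rw [I_sq]
    ring
  rw [h, Complex.im_ofReal_mul, Complex.exp_ofReal_mul_I_im]
  ring

theorem le_and_le_or_le_and_le_of_sin_mul_sin {ψ₀ ψ₁ ψ₂ ψ₃ a b : ℝ} (ha : 0 < a) (hb : 0 < b)
    (h₁ : ψ₁ ∈ Ico ψ₀ (ψ₀ + π)) (h₂ : ψ₂ ∈ Ioo ψ₀ (ψ₀ + π)) (h₃ : ψ₃ ∈ Ioc ψ₀ (ψ₀ + π))
    (h : a * (Real.sin (ψ₁ - ψ₀) * Real.sin (ψ₁ - ψ₂)) +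
      b * (Real.sin (ψ₃ - ψ₀) * Real.sin (ψ₃ - ψ₂)) = 0) :
    ψ₁ ≤ ψ₂ ∧ ψ₂ ≤ ψ₃ ∨ ψ₃ ≤ ψ₂ ∧ ψ₂ ≤ ψ₁ := by
  obtain ⟨h₁l, h₁u⟩ := h₁
  obtain ⟨h₂l, h₂u⟩ := h₂
  obtain ⟨h₃l, h₃u⟩ := h₃
  by_contra! hne
  rcases le_or_gt ψ₁ ψ₂ with h₁₂ | h₂₁
  · have h₃₂ : ψ₃ < ψ₂ := hne.1 h₁₂
    have s₁₀ := Real.sin_nonneg_of_nonneg_of_le_pi (sub_nonneg.2 h₁l) (by linarith)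
    have s₁₂ := Real.sin_nonpos_of_nonpos_of_neg_pi_le (sub_nonpos.2 h₁₂) (by linarith)
    have s₃₀ := Real.sin_pos_of_pos_of_lt_pi (sub_pos.2 h₃l) (by linarith)
    have s₃₂ := Real.sin_neg_of_neg_of_neg_pi_lt (sub_neg.2 h₃₂) (by linarith)
    have := mul_nonpos_of_nonneg_of_nonpos ha.le (mul_nonpos_of_nonneg_of_nonpos s₁₀ s₁₂)
    have := mul_neg_of_pos_of_neg hb (mul_neg_of_pos_of_neg s₃₀ s₃₂)
    linarith
  · have h₂₃ : ψ₂ < ψ₃ := lt_of_not_ge fun h₃₂ => (hne.2 h₃₂).not_gt h₂₁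
    have s₁₀ := Real.sin_pos_of_pos_of_lt_pi (by linarith : 0 < ψ₁ - ψ₀) (by linarith)
    have s₁₂ := Real.sin_pos_of_pos_of_lt_pi (sub_pos.2 h₂₁) (by linarith)
    have s₃₀ := Real.sin_nonneg_of_nonneg_of_le_pi (sub_nonneg.2 h₃l.le) (by linarith)
    have s₃₂ := Real.sin_pos_of_pos_of_lt_pi (sub_pos.2 h₂₃) (by linarith)
    have := mul_pos ha (mul_pos s₁₀ s₁₂)
    have := mul_nonneg hb.le (mul_nonneg s₃₀ s₃₂.le)
    linarith

theorem isRectangle_complexIncenter {c p₀ p₁ p₂ p₃ x : ℂ} {r : ℝ} (h₀ : dist c p₀ = r)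
    (h₁ : dist c p₁ = r) (h₂ : dist c p₂ = r) (h₃ : dist c p₃ = r)
    (h₀₂ : Sbtw ℝ p₀ x p₂) (h₁₃ : Sbtw ℝ p₁ x p₃) :
    IsRectangle (complexIncenter p₁ p₂ p₃) (complexIncenter p₀ p₂ p₃)
      (complexIncenter p₀ p₁ p₃) (complexIncenter p₀ p₁ p₂) := by
  have hr : 0 ≤ r := h₀ ▸ dist_nonneg
  have hne₀₂ := h₀₂.left_ne_right
  have hne₁₃ := h₁₃.left_ne_right
  obtain ⟨ψ₀, -, hp₀⟩ := exists_mem_Ico_circleMap_two_mul_eq h₀ 0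
  obtain ⟨ψ₁, hψ₁, hp₁⟩ := exists_mem_Ico_circleMap_two_mul_eq h₁ ψ₀
  obtain ⟨ψ₂, hψ₂, hp₂⟩ := exists_mem_Ico_circleMap_two_mul_eq h₂ ψ₀
  -- `ψ₃` is taken in `Ioc`, so that a degenerate `p₃ = p₀` is placed after `p₂`, not before it
  obtain ⟨ψ₃, hψ₃, hp₃⟩ := exists_mem_Ioc_circleMap_two_mul_eq h₃ ψ₀
  have hψ₀₂ : ψ₀ < ψ₂ := hψ₂.1.lt_of_ne (by rintro rfl; exact hne₀₂ (hp₀.symm.trans hp₂))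
  have hr' : 0 < r := hr.lt_of_ne (by
    rintro rfl; exact hne₀₂ (by rw [← hp₀, ← hp₂, circleMap_zero_radius]; rfl))
  have hK : 0 < 4 * r ^ 2 * Real.sin (ψ₂ - ψ₀) := by
    have := Real.sin_pos_of_pos_of_lt_pi (sub_pos.2 hψ₀₂) (by linarith [hψ₂.2])
    positivity
  obtain ⟨a, b, ha, hb, hab⟩ := exists_pos_im_mul_conj_eq_zero_of_sbtw h₀₂.wbtw h₁₃
  rw [← hp₀, ← hp₁, ← hp₂, ← hp₃, im_circleMap_sub_mul_conj, im_circleMap_sub_mul_conj] at hab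
  rcases le_and_le_or_le_and_le_of_sin_mul_sin ha hb hψ₁ ⟨hψ₀₂, hψ₂.2⟩ hψ₃
      ((mul_eq_zero.1 (by linear_combination hab)).resolve_left hK.ne') with
    ⟨h₁₂, h₂₃⟩ | ⟨h₃₂, h₂₁⟩
  · exact isRectangle_complexIncenter_of_sorted hr hp₀ hp₁ hp₂ hp₃ hψ₁.1 h₁₂ h₂₃ hψ₃.2 hne₀₂ hne₁₃
  · have := isRectangle_complexIncenter_of_sorted hr hp₀ hp₃ hp₂ hp₁ hψ₃.1.le h₃₂ h₂₁ hψ₁.2.le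
      hne₀₂ hne₁₃.symm
    rw [complexIncenter_reverse, complexIncenter_comm_right p₀ p₁ p₂,
      complexIncenter_comm_right p₀ p₁ p₃, complexIncenter_comm_right p₀ p₂ p₃] at this
    exact this.of_reverse

theorem stmt_14_general (P₀ P₁ P₂ P₃ O : EuclideanSpace ℝ (Fin 2)) (r : ℝ)
    (h0 : dist O P₀ = r) (h1 : dist O P₁ = r) (h2 : dist O P₂ = r) (h3 : dist O P₃ = r)
    (hcross : ∃ X : EuclideanSpace ℝ (Fin 2), Sbtw ℝ P₀ X P₂ ∧ Sbtw ℝ P₁ X P₃) :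
    incenter P₀ P₂ P₃ - incenter P₁ P₂ P₃ =
      incenter P₀ P₁ P₃ - incenter P₀ P₁ P₂ ∧
    dist (incenter P₁ P₂ P₃) (incenter P₀ P₁ P₃) =
      dist (incenter P₀ P₂ P₃) (incenter P₀ P₁ P₂) := by
  obtain ⟨X, hX₀₂, hX₁₃⟩ := hcross
  let e : EuclideanSpace ℝ (Fin 2) →ₗᵢ[ℝ] ℂ :=
    Complex.orthonormalBasisOneI.repr.symm.toLinearIsometry
  have he : ∀ {A B C}, Sbtw ℝ A B C → Sbtw ℝ (e A) (e B) (e C) := fun h =>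
    (Function.Injective.sbtw_map_iff (f := e.toLinearMap.toAffineMap) e.injective).2 h
  refine IsRectangle.of_map e ?_
  simp only [map_incenter]
  exact isRectangle_complexIncenter (by rw [e.dist_map, h0]) (by rw [e.dist_map, h1])
    (by rw [e.dist_map, h2]) (by rw [e.dist_map, h3]) (he hX₀₂) (he hX₁₃)

/-- Japanese theorem: if `P₀ P₁ P₂ P₃` lie on a circle, taken in cyclic order (their
diagonals `P₀P₂` and `P₁P₃` cross), then the incentres `J₀, J₁, J₂, J₃` of the four
triangles `P₁P₂P₃`, `P₀P₂P₃`, `P₀P₁P₃`, `P₀P₁P₂` form a rectangle, here expressed as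
a parallelogram (`J₁ - J₀ = J₂ - J₃`) with equal diagonals
(`dist J₀ J₂ = dist J₁ J₃`). -/
theorem stmt_14 (P₀ P₁ P₂ P₃ O : EuclideanSpace ℝ (Fin 2)) (r : ℝ) (hr : 0 < r)
    (h0 : dist O P₀ = r) (h1 : dist O P₁ = r) (h2 : dist O P₂ = r) (h3 : dist O P₃ = r)
    (hcross : ∃ X : EuclideanSpace ℝ (Fin 2), Sbtw ℝ P₀ X P₂ ∧ Sbtw ℝ P₁ X P₃) :
    incenter P₀ P₂ P₃ - incenter P₁ P₂ P₃ =
      incenter P₀ P₁ P₃ - incenter P₀ P₁ P₂ ∧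
    dist (incenter P₁ P₂ P₃) (incenter P₀ P₁ P₃) =
      dist (incenter P₀ P₂ P₃) (incenter P₀ P₁ P₂) :=
  stmt_14_general P₀ P₁ P₂ P₃ O r h0 h1 h2 h3 hcross
end

section
/- In any triangle, the necessary and sufficient condition 2s = 4R + r (s the semiperimeter, R the circumradius, r the inradius) is equivalent to tan(A/2) + tan(B/2) + tan(C/2) = 2, and also equivalent to the polynomial identity 5(a⁴+b⁴+c⁴) − 4(a³(b+c)+b³(c+a)+c³(a+b)) − 2(b²c²+c²a²+a²b²) + 4abc(a+b+c) = 0 in the edge lengths a, b, c. -/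
/-!
With `x = b + c - a`, `y = c + a - b`, `z = a + b - c` and `p = a + b + c`, Heron's formula
reads `16 Δ² = p x y z`, and the half-angle formula gives
`tan (A/2) = √(y z / (p x)) = y z / (4 Δ)`. Hence
`tan (A/2) + tan (B/2) + tan (C/2) = Q / (4 Δ)` with
`Q = x y + y z + z x = 2 (a b + b c + c a) - (a² + b² + c²)`, and a direct computation gives
the classical identity `4 R + r = s · Q / (4 Δ)`. So `2 s = 4 R + r` says `Q = 8 Δ`, that is
`Q² = 4 p x y z` since both sides are positive, and `Q² - 4 p x y z` is exactly the quartic of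
the statement.
-/

open Real

lemma Real.tan_half_arccos {t : ℝ} (h₁ : -1 ≤ t) (h₂ : t ≤ 1) :
    tan (arccos t / 2) = √((1 - t) / (1 + t)) := by
  have h₀ := arccos_nonneg t
  have hπ := arccos_le_pi t
  rw [tan_eq_sin_div_cos, sin_half_eq_sqrt h₀ (by linarith [pi_pos]), cos_half (by linarith) hπ,
    cos_arccos h₁ h₂, ← sqrt_div' _ (by linarith), div_div_div_cancel_right₀ two_ne_zero]

section Triangle

variable {a b c Δ : ℝ}

lemma tan_half_arccos_law_of_cosines (hb : 0 < b) (hc : 0 < c)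
    (hab : a < b + c) (hbc : b < c + a) (hca : c < a + b) (hΔ : 0 < Δ)
    (heron : 16 * Δ ^ 2 = (a + b + c) * (b + c - a) * (c + a - b) * (a + b - c)) :
    tan (arccos ((b ^ 2 + c ^ 2 - a ^ 2) / (2 * b * c)) / 2)
      = (c + a - b) * (a + b - c) / (4 * Δ) := by
  have hbc₂ : 0 < 2 * b * c := by positivity
  have hx : 0 < b + c - a := by linarith
  have hy : 0 < c + a - b := by linarith
  have hz : 0 < a + b - c := by linarith
  rw [tan_half_arccos, ← sqrt_sq (by positivity : 0 ≤ (c + a - b) * (a + b - c) / (4 * Δ))]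
  · have h₁ : 1 - (b ^ 2 + c ^ 2 - a ^ 2) / (2 * b * c)
        = (c + a - b) * (a + b - c) / (2 * b * c) := by
      field_simp; ring
    have h₂ : 1 + (b ^ 2 + c ^ 2 - a ^ 2) / (2 * b * c)
        = (a + b + c) * (b + c - a) / (2 * b * c) := by
      field_simp; ring
    rw [h₁, h₂, div_div_div_cancel_right₀ hbc₂.ne', div_pow, mul_pow]
    congr 1
    rw [div_eq_div_iff (mul_pos (by linarith) hx).ne' (by positivity)]
    linear_combination (c + a - b) * (a + b - c) * heron
  · rw [le_div_iff₀ hbc₂]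
    nlinarith [mul_pos hx (by linarith : 0 < a + b + c)]
  · rw [div_le_iff₀ hbc₂]
    nlinarith [mul_pos hy hz]

lemma sum_tan_half_arccos_law_of_cosines (ha : 0 < a) (hb : 0 < b) (hc : 0 < c)
    (hab : a < b + c) (hbc : b < c + a) (hca : c < a + b) (hΔ : 0 < Δ)
    (heron : 16 * Δ ^ 2 = (a + b + c) * (b + c - a) * (c + a - b) * (a + b - c)) :
    tan (arccos ((b ^ 2 + c ^ 2 - a ^ 2) / (2 * b * c)) / 2)
      + tan (arccos ((c ^ 2 + a ^ 2 - b ^ 2) / (2 * c * a)) / 2)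
      + tan (arccos ((a ^ 2 + b ^ 2 - c ^ 2) / (2 * a * b)) / 2)
      = (2 * (a * b + b * c + c * a) - (a ^ 2 + b ^ 2 + c ^ 2)) / (4 * Δ) := by
  rw [tan_half_arccos_law_of_cosines hb hc hab hbc hca hΔ heron,
    tan_half_arccos_law_of_cosines hc ha hbc hca hab hΔ (by linear_combination heron),
    tan_half_arccos_law_of_cosines ha hb hca hab hbc hΔ (by linear_combination heron)]
  ring

lemma four_mul_circumradius_add_inradius (hp : a + b + c ≠ 0) (hΔ : Δ ≠ 0)
    (heron : 16 * Δ ^ 2 = (a + b + c) * (b + c - a) * (c + a - b) * (a + b - c)) :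
    4 * (a * b * c / (4 * Δ)) + Δ / ((a + b + c) / 2)
      = (a + b + c) / 2 * ((2 * (a * b + b * c + c * a) - (a ^ 2 + b ^ 2 + c ^ 2)) / (4 * Δ)) := by
  field_simp
  linear_combination heron

end Triangle

/-- In any triangle with side lengths `a, b, c`, semiperimeter `s`, circumradius `R`,
inradius `r` and angles `A, B, C`, the condition `2s = 4R + r` is equivalent to
`tan (A/2) + tan (B/2) + tan (C/2) = 2`, and also equivalent to the polynomial
identity `5(a⁴+b⁴+c⁴) − 4(a³(b+c)+b³(c+a)+c³(a+b)) − 2(b²c²+c²a²+a²b²)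
+ 4abc(a+b+c) = 0`. -/
theorem stmt_15 (a b c : ℝ) (ha : 0 < a) (hb : 0 < b) (hc : 0 < c)
    (hab : a < b + c) (hbc : b < c + a) (hca : c < a + b) :
    let s : ℝ := (a + b + c) / 2
    let Δ : ℝ := Real.sqrt (s * (s - a) * (s - b) * (s - c))
    let R : ℝ := a * b * c / (4 * Δ)
    let r : ℝ := Δ / s
    let A : ℝ := Real.arccos ((b ^ 2 + c ^ 2 - a ^ 2) / (2 * b * c))
    let B : ℝ := Real.arccos ((c ^ 2 + a ^ 2 - b ^ 2) / (2 * c * a))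
    let C : ℝ := Real.arccos ((a ^ 2 + b ^ 2 - c ^ 2) / (2 * a * b))
    ((2 * s = 4 * R + r ↔
        Real.tan (A / 2) + Real.tan (B / 2) + Real.tan (C / 2) = 2) ∧
     (2 * s = 4 * R + r ↔
        5 * (a ^ 4 + b ^ 4 + c ^ 4)
          - 4 * (a ^ 3 * (b + c) + b ^ 3 * (c + a) + c ^ 3 * (a + b))
          - 2 * (b ^ 2 * c ^ 2 + c ^ 2 * a ^ 2 + a ^ 2 * b ^ 2)
          + 4 * a * b * c * (a + b + c) = 0)) := by
  intro s Δ R r A B C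
  have hp : 0 < a + b + c := by linarith
  have hx : 0 < b + c - a := by linarith
  have hy : 0 < c + a - b := by linarith
  have hz : 0 < a + b - c := by linarith
  have hs : s * (s - a) * (s - b) * (s - c)
      = (a + b + c) * (b + c - a) * (c + a - b) * (a + b - c) / 16 := by ring
  have hΔ : 0 < Δ := sqrt_pos.2 (by rw [hs]; positivity)
  have heron : 16 * Δ ^ 2 = (a + b + c) * (b + c - a) * (c + a - b) * (a + b - c) := by
    rw [sq_sqrt (by rw [hs]; positivity), hs]; ring
  have hQ : 0 < 2 * (a * b + b * c + c * a) - (a ^ 2 + b ^ 2 + c ^ 2) := by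
    nlinarith [mul_pos hx hy, mul_pos hy hz, mul_pos hz hx]
  have hcond : 2 * s = 4 * R + r
      ↔ (2 * (a * b + b * c + c * a) - (a ^ 2 + b ^ 2 + c ^ 2)) / (4 * Δ) = 2 := by
    rw [four_mul_circumradius_add_inradius hp.ne' hΔ.ne' heron, mul_comm 2 s, eq_comm]
    exact mul_right_inj' (by positivity)
  refine ⟨sum_tan_half_arccos_law_of_cosines ha hb hc hab hbc hca hΔ heron ▸ hcond,
    hcond.trans ?_⟩
  rw [div_eq_iff (by positivity), ← sq_eq_sq₀ hQ.le (by positivity)]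
  constructor <;> intro h
  · linear_combination h + 4 * heron
  · linear_combination h - 4 * heron
end

section
/- A rational triangle has an angle A with cos A = −7/25 if and only if its sides are proportional to a : b : c = 24(p²+q²) : (−7p²+48pq+7q²) : 25(p²−q²) for some rationals p, q; such (a,b,c) satisfy the triangle inequality whenever 7q > p > q > 0, and the relation 25(b²+c²−a²) = −14bc can be rewritten as (25a)² = (24c)² + (25b+7c)². -/
/-!
The relation `25(b² + c² − a²) = −14bc` says exactly that `(25a, 24c, 25b + 7c)` is a
Pythagorean triple, and the rational points of `X² = Y² + Z²` are parametrised by the slope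
`p / q = (X + Y) / Z`, giving `(X, Y, Z) ∝ (p² + q², p² − q², 2pq)`; solving back for `a, b, c`
yields the stated proportions. For `q < p < 7q` the three sides and the three triangle
defects `b + c − a = 6(p − q)(7q − p)`, `c + a − b = 8(p − q)(7p + q)`,
`a + b − c = 8(7q − p)(p + q)` are products of positive factors.
-/

section Relation

variable {K : Type*} [Field K] [CharZero K]

theorem div_two_mul_eq_neg_seven_div_twentyFive_iff {a b c : K} (hb : b ≠ 0) (hc : c ≠ 0) :
    (b ^ 2 + c ^ 2 - a ^ 2) / (2 * b * c) = -(7 / 25) ↔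
      25 * (b ^ 2 + c ^ 2 - a ^ 2) = -14 * b * c := by
  rw [div_eq_iff (by simp [hb, hc])]
  constructor <;> intro h
  · linear_combination 25 * h
  · linear_combination h / 25

theorem relation_iff_pythagorean {a b c : K} :
    25 * (b ^ 2 + c ^ 2 - a ^ 2) = -14 * b * c ↔
      (25 * a) ^ 2 = (24 * c) ^ 2 + (25 * b + 7 * c) ^ 2 := by
  constructor <;> intro h
  · linear_combination (-25) * h
  · linear_combination (-1 / 25 : K) * h

end Relation

theorem relation_of_params {K : Type*} [CommRing K] (p q k : K) :
    25 * ((k * (-7 * p ^ 2 + 48 * p * q + 7 * q ^ 2)) ^ 2 + (k * (25 * (p ^ 2 - q ^ 2))) ^ 2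
        - (k * (24 * (p ^ 2 + q ^ 2))) ^ 2) =
      -14 * (k * (-7 * p ^ 2 + 48 * p * q + 7 * q ^ 2)) * (k * (25 * (p ^ 2 - q ^ 2))) := by
  ring

section Ordered

variable {K : Type*} [Field K] [LinearOrder K] [IsStrictOrderedRing K]

theorem exists_params_of_relation {a b c : K} (ha : 0 < a) (hb : 0 < b) (hc : 0 < c)
    (h : 25 * (b ^ 2 + c ^ 2 - a ^ 2) = -14 * b * c) :
    ∃ p q k : K, 0 < k ∧ a = k * (24 * (p ^ 2 + q ^ 2)) ∧
      b = k * (-7 * p ^ 2 + 48 * p * q + 7 * q ^ 2) ∧ c = k * (25 * (p ^ 2 - q ^ 2)) := by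
  have hX : 0 < 25 * a + 24 * c := by positivity
  have hZ : 0 < 25 * b + 7 * c := by positivity
  -- the slope `(X + Y) / Z` of the Pythagorean triple `(25a, 24c, 25b + 7c)`
  refine ⟨(25 * a + 24 * c) / (25 * b + 7 * c), 1,
    (25 * b + 7 * c) ^ 2 / (1200 * (25 * a + 24 * c)), by positivity, ?_, ?_, ?_⟩
  · field_simp
    linear_combination (-600) * h
  · field_simp
    linear_combination (-175) * h
  · field_simp
    linear_combination 625 * h

variable {p q : K}

theorem sides_pos_of_params (hq : 0 < q) (hqp : q < p) (hp7 : p < 7 * q) :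
    0 < 24 * (p ^ 2 + q ^ 2) ∧ 0 < -7 * p ^ 2 + 48 * p * q + 7 * q ^ 2 ∧
      0 < 25 * (p ^ 2 - q ^ 2) := by
  have hp : 0 < p := hq.trans hqp
  refine ⟨by positivity, ?_, ?_⟩
  · linarith [mul_pos (sub_pos.2 hp7) (by positivity : 0 < 7 * p + q)]
  · linarith [mul_pos (sub_pos.2 hqp) (add_pos hp hq)]

theorem triangle_ineq_of_params (hq : 0 < q) (hqp : q < p) (hp7 : p < 7 * q) :
    24 * (p ^ 2 + q ^ 2) <
        (-7 * p ^ 2 + 48 * p * q + 7 * q ^ 2) + 25 * (p ^ 2 - q ^ 2) ∧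
      -7 * p ^ 2 + 48 * p * q + 7 * q ^ 2 < 25 * (p ^ 2 - q ^ 2) + 24 * (p ^ 2 + q ^ 2) ∧
      25 * (p ^ 2 - q ^ 2) < 24 * (p ^ 2 + q ^ 2) + (-7 * p ^ 2 + 48 * p * q + 7 * q ^ 2) := by
  have hp : 0 < p := hq.trans hqp
  refine ⟨?_, ?_, ?_⟩
  · linarith [mul_pos (sub_pos.2 hqp) (sub_pos.2 hp7)]
  · linarith [mul_pos (sub_pos.2 hqp) (by positivity : 0 < 7 * p + q)]
  · linarith [mul_pos (sub_pos.2 hp7) (add_pos hp hq)]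

end Ordered

/-- A rational triangle has an angle `A` with `cos A = −7/25` iff its sides are
proportional to `a : b : c = 24(p²+q²) : (−7p²+48pq+7q²) : 25(p²−q²)` for some
rationals `p, q`; such `(a, b, c)` are positive and satisfy the triangle inequality
whenever `7q > p > q > 0`; and the relation `25(b²+c²−a²) = −14bc` can be rewritten
as `(25a)² = (24c)² + (25b+7c)²`. -/
theorem stmt_17 :
    (∀ a b c : ℚ, 0 < a → 0 < b → 0 < c →
      ((b ^ 2 + c ^ 2 - a ^ 2) / (2 * b * c) = -(7 / 25) ↔
        ∃ p q k : ℚ, 0 < k ∧ a = k * (24 * (p ^ 2 + q ^ 2)) ∧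
          b = k * (-7 * p ^ 2 + 48 * p * q + 7 * q ^ 2) ∧
          c = k * (25 * (p ^ 2 - q ^ 2)))) ∧
    (∀ p q : ℚ, 0 < q → q < p → p < 7 * q →
      (0 < 24 * (p ^ 2 + q ^ 2) ∧ 0 < -7 * p ^ 2 + 48 * p * q + 7 * q ^ 2 ∧
        0 < 25 * (p ^ 2 - q ^ 2)) ∧
      (24 * (p ^ 2 + q ^ 2) <
          (-7 * p ^ 2 + 48 * p * q + 7 * q ^ 2) + 25 * (p ^ 2 - q ^ 2) ∧
        -7 * p ^ 2 + 48 * p * q + 7 * q ^ 2 <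
          25 * (p ^ 2 - q ^ 2) + 24 * (p ^ 2 + q ^ 2) ∧
        25 * (p ^ 2 - q ^ 2) <
          24 * (p ^ 2 + q ^ 2) + (-7 * p ^ 2 + 48 * p * q + 7 * q ^ 2))) ∧
    (∀ a b c : ℚ, 25 * (b ^ 2 + c ^ 2 - a ^ 2) = -14 * b * c ↔
      (25 * a) ^ 2 = (24 * c) ^ 2 + (25 * b + 7 * c) ^ 2) := by
  refine ⟨fun a b c ha hb hc => ?_, fun p q hq hqp hp7 =>
    ⟨sides_pos_of_params hq hqp hp7, triangle_ineq_of_params hq hqp hp7⟩,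
    fun a b c => relation_iff_pythagorean⟩
  rw [div_two_mul_eq_neg_seven_div_twentyFive_iff hb.ne' hc.ne']
  refine ⟨exists_params_of_relation ha hb hc, ?_⟩
  rintro ⟨p, q, k, -, rfl, rfl, rfl⟩
  exact relation_of_params p q k
end

section
/- In an orthocentric tetrahedron with orthocentre at the origin and vertices a, b, c, d (all pairwise dot products equal to σ), the point q = (a+b+c+d)/2 is equidistant from all four vertices (hence is the circumcentre), and the centroid g = (a+b+c+d)/4 is the midpoint of the segment from the orthocentre to the circumcentre; moreover the six midpoints of the edges are equidistant from g. -/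
/-!
If the vectors `v i` have pairwise equal inner products `σ`, then `⟪∑ j, v j, v i⟫ - ‖v i‖²`
does not depend on `i`. Expanding `dist (t • ∑ j, v j) (u • x)²`, the terms in `‖v i‖²` cancel
exactly when `2 t = u`: for `t = 1/2, u = 1` (vertices) and for `t = 1/4, u = 1/2` (edge midpoints
`(v i + v j)/2`), whatever the number of vectors.
-/

open RealInnerProductSpace Finset

lemma dist_smul_smul_sq {E : Type*} [NormedAddCommGroup E] [InnerProductSpace ℝ E]
    (t u : ℝ) (x y : E) :
    dist (t • x) (u • y) ^ 2 = t ^ 2 * ‖x‖ ^ 2 - 2 * (t * u) * ⟪x, y⟫ + u ^ 2 * ‖y‖ ^ 2 := by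
  rw [dist_eq_norm, norm_sub_sq_real, norm_smul, norm_smul, real_inner_smul_left,
    real_inner_smul_right, mul_pow, mul_pow, Real.norm_eq_abs, Real.norm_eq_abs, sq_abs, sq_abs]
  ring

namespace EqualInnerProducts

variable {E ι : Type*} [NormedAddCommGroup E] [InnerProductSpace ℝ E] [Fintype ι]
  {v : ι → E} {σ : ℝ}

lemma inner_sum_left (hv : Pairwise fun i j ↦ ⟪v i, v j⟫ = σ) (i : ι) :
    ⟪∑ j, v j, v i⟫ = ‖v i‖ ^ 2 + (Fintype.card ι - 1) * σ := by
  classical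
  rw [sum_inner, ← add_sum_erase _ _ (mem_univ i), real_inner_self_eq_norm_sq,
    sum_congr rfl fun j hj ↦ hv (ne_of_mem_erase hj), sum_const, card_erase_of_mem (mem_univ i),
    card_univ, nsmul_eq_mul, Nat.cast_pred (Fintype.card_pos_iff.2 ⟨i⟩)]

lemma dist_half_smul_sum_sq (hv : Pairwise fun i j ↦ ⟪v i, v j⟫ = σ) (i : ι) :
    dist ((2 : ℝ)⁻¹ • ∑ j, v j) (v i) ^ 2 =
      ‖∑ j, v j‖ ^ 2 / 4 - (Fintype.card ι - 1) * σ := by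
  have h := dist_smul_smul_sq (2 : ℝ)⁻¹ 1 (∑ j, v j) (v i)
  rw [one_smul, inner_sum_left hv] at h
  rw [h]
  ring

lemma dist_quarter_smul_sum_midpoint_sq (hv : Pairwise fun i j ↦ ⟪v i, v j⟫ = σ) {i j : ι}
    (hij : i ≠ j) :
    dist ((4 : ℝ)⁻¹ • ∑ k, v k) (midpoint ℝ (v i) (v j)) ^ 2 =
      ‖∑ k, v k‖ ^ 2 / 16 - (Fintype.card ι - 2) / 2 * σ := by
  rw [midpoint_eq_smul_add, invOf_eq_inv, dist_smul_smul_sq, inner_add_right,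
    inner_sum_left hv, inner_sum_left hv, norm_add_sq_real, hv hij]
  ring

theorem dist_half_smul_sum_eq (hv : Pairwise fun i j ↦ ⟪v i, v j⟫ = σ) (i j : ι) :
    dist ((2 : ℝ)⁻¹ • ∑ k, v k) (v i) = dist ((2 : ℝ)⁻¹ • ∑ k, v k) (v j) := by
  rw [← sq_eq_sq₀ dist_nonneg dist_nonneg, dist_half_smul_sum_sq hv, dist_half_smul_sum_sq hv]

theorem dist_quarter_smul_sum_midpoint_eq (hv : Pairwise fun i j ↦ ⟪v i, v j⟫ = σ)
    {i j k l : ι} (hij : i ≠ j) (hkl : k ≠ l) :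
    dist ((4 : ℝ)⁻¹ • ∑ m, v m) (midpoint ℝ (v i) (v j)) =
      dist ((4 : ℝ)⁻¹ • ∑ m, v m) (midpoint ℝ (v k) (v l)) := by
  rw [← sq_eq_sq₀ dist_nonneg dist_nonneg, dist_quarter_smul_sum_midpoint_sq hv hij,
    dist_quarter_smul_sum_midpoint_sq hv hkl]

end EqualInnerProducts

open EqualInnerProducts

/-- In an orthocentric tetrahedron with orthocentre at the origin and vertices
`a, b, c, d` (all pairwise inner products equal to `σ`), the point
`q = (a+b+c+d)/2` is equidistant from all four vertices (hence is the circumcentre),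
the centroid `g = (a+b+c+d)/4` is the midpoint of the segment from the orthocentre
(the origin) to the circumcentre, and the six midpoints of the edges are equidistant
from `g`. -/
theorem stmt_19 (a b c d : EuclideanSpace ℝ (Fin 3)) (σ : ℝ)
    (hab : ⟪a, b⟫ = σ) (hac : ⟪a, c⟫ = σ) (had : ⟪a, d⟫ = σ)
    (hbc : ⟪b, c⟫ = σ) (hbd : ⟪b, d⟫ = σ) (hcd : ⟪c, d⟫ = σ) :
    let q : EuclideanSpace ℝ (Fin 3) := (2 : ℝ)⁻¹ • (a + b + c + d)
    let g : EuclideanSpace ℝ (Fin 3) := (4 : ℝ)⁻¹ • (a + b + c + d)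
    (dist q a = dist q b ∧ dist q b = dist q c ∧ dist q c = dist q d) ∧
    g = midpoint ℝ (0 : EuclideanSpace ℝ (Fin 3)) q ∧
    (dist g (midpoint ℝ a b) = dist g (midpoint ℝ a c) ∧
      dist g (midpoint ℝ a c) = dist g (midpoint ℝ a d) ∧
      dist g (midpoint ℝ a d) = dist g (midpoint ℝ b c) ∧
      dist g (midpoint ℝ b c) = dist g (midpoint ℝ b d) ∧
      dist g (midpoint ℝ b d) = dist g (midpoint ℝ c d)) := by
  intro q g
  set v : Fin 4 → EuclideanSpace ℝ (Fin 3) := ![a, b, c, d]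
  have hv : Pairwise fun i j ↦ ⟪v i, v j⟫ = σ := by
    intro i j hij
    fin_cases i <;> fin_cases j <;> simp_all [v, real_inner_comm]
  have hsum : a + b + c + d = ∑ i, v i := by simp [v, Fin.sum_univ_four]
  have hg : g = midpoint ℝ 0 q := by
    rw [midpoint_eq_smul_add, zero_add, smul_smul, invOf_eq_inv]
    norm_num [g, q]
  refine ⟨?_, hg, ?_⟩ <;> simp only [q, g, hsum]
  · exact ⟨dist_half_smul_sum_eq hv 0 1, dist_half_smul_sum_eq hv 1 2,
      dist_half_smul_sum_eq hv 2 3⟩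
  · have hmid (i j k l : Fin 4) (hij : i ≠ j) (hkl : k ≠ l) :=
      dist_quarter_smul_sum_midpoint_eq hv hij hkl
    exact ⟨hmid 0 1 0 2 (by decide) (by decide), hmid 0 2 0 3 (by decide) (by decide),
      hmid 0 3 1 2 (by decide) (by decide), hmid 1 2 1 3 (by decide) (by decide),
      hmid 1 3 2 3 (by decide) (by decide)⟩
end
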